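/- arXiv:2602.05689 — 6 statements merged into one kernel-verified Lean document; each statement's English description precedes it below -/
import Mathlib

section
/- Let tp : Tm ⟶ Ty be a universe with an elementary Π-type structure. Then unlam is stable under substitution: for every σ : Δ ⟶ Γ, A : Γ ⟶ Ty, B : Γ.A ⟶ Ty, and f : Γ ⟶ Tm with f ≫ tp = Π_A B, one has unlam(σ ≫ f) = σ̃ ≫ unlam f, where σ̃ : Δ.(σ ≫ A) ⟶ Γ.A is the map (d_{σ≫A} ≫ σ).var_{σ≫A}. This follows from the stability of lam under substitution together with the β- and η-rules alone. -/
namespace Paper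

open CategoryTheory Limits

universe v u

variable {C : Type u} [Category.{v} C]

/-- A universe in a category `C`: a morphism `tp : Tm ⟶ Ty` together with chosen
pullbacks (context extensions) along every `A : Γ ⟶ Ty`. -/
structure Univ (C : Type u) [Category.{v} C] where
  Tm : C
  Ty : C
  tp : Tm ⟶ Ty
  ext : ∀ {Γ : C}, (Γ ⟶ Ty) → C
  disp : ∀ {Γ : C} (A : Γ ⟶ Ty), ext A ⟶ Γ
  var : ∀ {Γ : C} (A : Γ ⟶ Ty), ext A ⟶ Tm
  isPullback : ∀ {Γ : C} (A : Γ ⟶ Ty), IsPullback (var A) (disp A) tp A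

/-- The induced map `σ.a : Δ ⟶ Γ.A` into the chosen pullback. -/
noncomputable def Univ.substCons (U : Univ C) {Δ Γ : C} (σ : Δ ⟶ Γ) (A : Γ ⟶ U.Ty)
    (a : Δ ⟶ U.Tm) (h : a ≫ U.tp = σ ≫ A) : Δ ⟶ U.ext A :=
  (U.isPullback A).lift a σ h

@[simp] lemma Univ.substCons_var (U : Univ C) {Δ Γ : C} (σ : Δ ⟶ Γ) (A : Γ ⟶ U.Ty)
    (a : Δ ⟶ U.Tm) (h : a ≫ U.tp = σ ≫ A) : U.substCons σ A a h ≫ U.var A = a :=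
  (U.isPullback A).lift_fst a σ h

@[simp] lemma Univ.substCons_disp (U : Univ C) {Δ Γ : C} (σ : Δ ⟶ Γ) (A : Γ ⟶ U.Ty)
    (a : Δ ⟶ U.Tm) (h : a ≫ U.tp = σ ≫ A) : U.substCons σ A a h ≫ U.disp A = σ :=
  (U.isPullback A).lift_snd a σ h

/-- The weakening `σ̃ := (d_{σ≫A} ≫ σ).var_{σ≫A} : Δ.(σ ≫ A) ⟶ Γ.A`. -/
noncomputable def Univ.wk (U : Univ C) {Δ Γ : C} (σ : Δ ⟶ Γ) (A : Γ ⟶ U.Ty) :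
    U.ext (σ ≫ A) ⟶ U.ext A :=
  U.substCons (U.disp (σ ≫ A) ≫ σ) A (U.var (σ ≫ A))
    (by rw [(U.isPullback (σ ≫ A)).w, Category.assoc])

/-- The section `id_Γ.a : Γ ⟶ Γ.A` of a term `a` of type `A`. -/
noncomputable def Univ.sec (U : Univ C) {Γ : C} (A : Γ ⟶ U.Ty) (a : Γ ⟶ U.Tm)
    (ha : a ≫ U.tp = A) : Γ ⟶ U.ext A :=
  U.substCons (𝟙 Γ) A a (by rw [ha, Category.id_comp])

@[simp] lemma Univ.sec_var (U : Univ C) {Γ : C} (A : Γ ⟶ U.Ty) (a : Γ ⟶ U.Tm)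
    (ha : a ≫ U.tp = A) : U.sec A a ha ≫ U.var A = a :=
  U.substCons_var _ _ _ _

@[simp] lemma Univ.sec_disp (U : Univ C) {Γ : C} (A : Γ ⟶ U.Ty) (a : Γ ⟶ U.Tm)
    (ha : a ≫ U.tp = A) : U.sec A a ha ≫ U.disp A = 𝟙 Γ :=
  U.substCons_disp _ _ _ _

/-- An elementary `Unit`-type structure on a universe. -/
structure ElemUnit (U : Univ C) where
  unitTy : ∀ (Γ : C), Γ ⟶ U.Ty
  unitTy_stable : ∀ {Δ Γ : C} (σ : Δ ⟶ Γ), σ ≫ unitTy Γ = unitTy Δ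
  unitTm : ∀ (Γ : C), Γ ⟶ U.Tm
  unitTm_tp : ∀ (Γ : C), unitTm Γ ≫ U.tp = unitTy Γ
  unitTm_unique : ∀ {Γ : C} (u : Γ ⟶ U.Tm), u ≫ U.tp = unitTy Γ → u = unitTm Γ

/-- An elementary `Π`-type structure on a universe (unlam-stability is not assumed). -/
structure ElemPi (U : Univ C) where
  Pi : ∀ {Γ : C} (A : Γ ⟶ U.Ty), (U.ext A ⟶ U.Ty) → (Γ ⟶ U.Ty)
  Pi_stable : ∀ {Δ Γ : C} (σ : Δ ⟶ Γ) (A : Γ ⟶ U.Ty) (B : U.ext A ⟶ U.Ty),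
    Pi (σ ≫ A) (U.wk σ A ≫ B) = σ ≫ Pi A B
  lam : ∀ {Γ : C} (A : Γ ⟶ U.Ty), (U.ext A ⟶ U.Tm) → (Γ ⟶ U.Tm)
  lam_tp : ∀ {Γ : C} (A : Γ ⟶ U.Ty) (b : U.ext A ⟶ U.Tm),
    lam A b ≫ U.tp = Pi A (b ≫ U.tp)
  lam_stable : ∀ {Δ Γ : C} (σ : Δ ⟶ Γ) (A : Γ ⟶ U.Ty) (b : U.ext A ⟶ U.Tm),
    lam (σ ≫ A) (U.wk σ A ≫ b) = σ ≫ lam A b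
  unlam : ∀ {Γ : C} (A : Γ ⟶ U.Ty) (B : U.ext A ⟶ U.Ty) (f : Γ ⟶ U.Tm),
    f ≫ U.tp = Pi A B → (U.ext A ⟶ U.Tm)
  unlam_tp : ∀ {Γ : C} (A : Γ ⟶ U.Ty) (B : U.ext A ⟶ U.Ty) (f : Γ ⟶ U.Tm)
    (hf : f ≫ U.tp = Pi A B), unlam A B f hf ≫ U.tp = B
  unlam_lam : ∀ {Γ : C} (A : Γ ⟶ U.Ty) (b : U.ext A ⟶ U.Tm)
    (h : lam A b ≫ U.tp = Pi A (b ≫ U.tp)), unlam A (b ≫ U.tp) (lam A b) h = b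
  lam_unlam : ∀ {Γ : C} (A : Γ ⟶ U.Ty) (B : U.ext A ⟶ U.Ty) (f : Γ ⟶ U.Tm)
    (hf : f ≫ U.tp = Pi A B), lam A (unlam A B f hf) = f

/-- An elementary `Σ`-type structure on a universe (fst/snd-stability is not assumed). -/
structure ElemSigma (U : Univ C) where
  Sig : ∀ {Γ : C} (A : Γ ⟶ U.Ty), (U.ext A ⟶ U.Ty) → (Γ ⟶ U.Ty)
  Sig_stable : ∀ {Δ Γ : C} (σ : Δ ⟶ Γ) (A : Γ ⟶ U.Ty) (B : U.ext A ⟶ U.Ty),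
    Sig (σ ≫ A) (U.wk σ A ≫ B) = σ ≫ Sig A B
  pair : ∀ {Γ : C} (A : Γ ⟶ U.Ty) (B : U.ext A ⟶ U.Ty) (a b : Γ ⟶ U.Tm)
    (ha : a ≫ U.tp = A), b ≫ U.tp = U.sec A a ha ≫ B → (Γ ⟶ U.Tm)
  pair_tp : ∀ {Γ : C} (A : Γ ⟶ U.Ty) (B : U.ext A ⟶ U.Ty) (a b : Γ ⟶ U.Tm)
    (ha : a ≫ U.tp = A) (hb : b ≫ U.tp = U.sec A a ha ≫ B),
    pair A B a b ha hb ≫ U.tp = Sig A B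
  pair_stable : ∀ {Δ Γ : C} (σ : Δ ⟶ Γ) (A : Γ ⟶ U.Ty) (B : U.ext A ⟶ U.Ty)
    (a b : Γ ⟶ U.Tm) (ha : a ≫ U.tp = A) (hb : b ≫ U.tp = U.sec A a ha ≫ B)
    (ha' : (σ ≫ a) ≫ U.tp = σ ≫ A)
    (hb' : (σ ≫ b) ≫ U.tp = U.sec (σ ≫ A) (σ ≫ a) ha' ≫ (U.wk σ A ≫ B)),
    pair (σ ≫ A) (U.wk σ A ≫ B) (σ ≫ a) (σ ≫ b) ha' hb' = σ ≫ pair A B a b ha hb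
  fst : ∀ {Γ : C} (A : Γ ⟶ U.Ty) (B : U.ext A ⟶ U.Ty) (s : Γ ⟶ U.Tm),
    s ≫ U.tp = Sig A B → (Γ ⟶ U.Tm)
  snd : ∀ {Γ : C} (A : Γ ⟶ U.Ty) (B : U.ext A ⟶ U.Ty) (s : Γ ⟶ U.Tm),
    s ≫ U.tp = Sig A B → (Γ ⟶ U.Tm)
  fst_tp : ∀ {Γ : C} (A : Γ ⟶ U.Ty) (B : U.ext A ⟶ U.Ty) (s : Γ ⟶ U.Tm)
    (hs : s ≫ U.tp = Sig A B), fst A B s hs ≫ U.tp = A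
  snd_tp : ∀ {Γ : C} (A : Γ ⟶ U.Ty) (B : U.ext A ⟶ U.Ty) (s : Γ ⟶ U.Tm)
    (hs : s ≫ U.tp = Sig A B),
    snd A B s hs ≫ U.tp = U.sec A (fst A B s hs) (fst_tp A B s hs) ≫ B
  fst_pair : ∀ {Γ : C} (A : Γ ⟶ U.Ty) (B : U.ext A ⟶ U.Ty) (a b : Γ ⟶ U.Tm)
    (ha : a ≫ U.tp = A) (hb : b ≫ U.tp = U.sec A a ha ≫ B)
    (h : pair A B a b ha hb ≫ U.tp = Sig A B), fst A B (pair A B a b ha hb) h = a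
  snd_pair : ∀ {Γ : C} (A : Γ ⟶ U.Ty) (B : U.ext A ⟶ U.Ty) (a b : Γ ⟶ U.Tm)
    (ha : a ≫ U.tp = A) (hb : b ≫ U.tp = U.sec A a ha ≫ B)
    (h : pair A B a b ha hb ≫ U.tp = Sig A B), snd A B (pair A B a b ha hb) h = b
  pair_fst_snd : ∀ {Γ : C} (A : Γ ⟶ U.Ty) (B : U.ext A ⟶ U.Ty) (s : Γ ⟶ U.Tm)
    (hs : s ≫ U.tp = Sig A B) (h1 : fst A B s hs ≫ U.tp = A)
    (h2 : snd A B s hs ≫ U.tp = U.sec A (fst A B s hs) h1 ≫ B),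
    pair A B (fst A B s hs) (snd A B s hs) h1 h2 = s

/-- A weak pullback structure on a commutative square. -/
structure WeakPullbackStr {P X Y Z : C} (g' : P ⟶ X) (f' : P ⟶ Y) (f : X ⟶ Z) (g : Y ⟶ Z) where
  lift : ∀ {W : C} (x : W ⟶ X) (y : W ⟶ Y), x ≫ f = y ≫ g → (W ⟶ P)
  lift_fst : ∀ {W : C} (x : W ⟶ X) (y : W ⟶ Y) (h : x ≫ f = y ≫ g), lift x y h ≫ g' = x
  lift_snd : ∀ {W : C} (x : W ⟶ X) (y : W ⟶ Y) (h : x ≫ f = y ≫ g), lift x y h ≫ f' = y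

/-- Coherence of a weak pullback structure: the chosen lifts commute with all cone morphisms. -/
def WeakPullbackStr.Coherent {P X Y Z : C} {g' : P ⟶ X} {f' : P ⟶ Y} {f : X ⟶ Z} {g : Y ⟶ Z}
    (w : WeakPullbackStr g' f' f g) : Prop :=
  ∀ {V W : C} (σ : V ⟶ W) (x : W ⟶ X) (y : W ⟶ Y) (h : x ≫ f = y ≫ g)
    (h' : (σ ≫ x) ≫ f = (σ ≫ y) ≫ g),
    σ ≫ w.lift x y h = w.lift (σ ≫ x) (σ ≫ y) h'

end Paper

namespace Paper.ElemPi

open CategoryTheory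

theorem unlam_eq_of_lam_eq {C : Type*} [Category C] {U : Univ C} (P : ElemPi U) {Γ : C}
    (A : Γ ⟶ U.Ty) {B : U.ext A ⟶ U.Ty} {b : U.ext A ⟶ U.Tm} (f : Γ ⟶ U.Tm)
    (hf : f ≫ U.tp = P.Pi A B) (hb : b ≫ U.tp = B) (hlam : P.lam A b = f) :
    P.unlam A B f hf = b := by
  subst hb hlam
  exact P.unlam_lam A b hf

end Paper.ElemPi

open CategoryTheory Limits Paper in
/-- `unlam` is stable under substitution; this follows from the
stability of `lam` together with the β- and η-rules alone (none of which assume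
stability of `unlam`, cf. `Paper.ElemPi`). -/
theorem unlam_stable {C : Type*} [Category C] (U : Univ C) (P : ElemPi U)
    {Δ Γ : C} (σ : Δ ⟶ Γ) (A : Γ ⟶ U.Ty) (B : U.ext A ⟶ U.Ty)
    (f : Γ ⟶ U.Tm) (hf : f ≫ U.tp = P.Pi A B)
    (hf' : (σ ≫ f) ≫ U.tp = P.Pi (σ ≫ A) (U.wk σ A ≫ B)) :
    P.unlam (σ ≫ A) (U.wk σ A ≫ B) (σ ≫ f) hf' = U.wk σ A ≫ P.unlam A B f hf := by
  refine P.unlam_eq_of_lam_eq (σ ≫ A) (σ ≫ f) hf' ?_ ?_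
  · rw [Category.assoc, P.unlam_tp]
  · rw [P.lam_stable, P.lam_unlam]
end

section
/- (Distributivity law) Let g : Z ⟶ Y and f : Y ⟶ X be R-maps in a π-clan (C, R). Set q := f_* g : f_* Z ⟶ X, let f' : f ×_X q ⟶ f_* Z be the pullback of f along q, and let ε : f ×_X q ⟶ Z be the counit of the adjunction f^* ⊣ f_* : R(X) ⇄ R(Y) at g. Then there is a canonical natural isomorphism g_! ≫ f_* ≅ ε^* ≫ f'_* ≫ q_! of functors R(Z) ⟶ R(X). -/
namespace Paper

open CategoryTheory Limits

universe v u

variable {C : Type u} [Category.{v} C]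

/-- A pushforward of `g : Z ⟶ Y` along `f : Y ⟶ X`, presented by a counit and the
universal property `Hom_{C/Y}(f^* h, g) ≅ Hom_{C/X}(h, f_* g)`, natural in `h ∈ C/X`
(the naturality being packaged by the counit formulation). -/
structure Pushforward {X Y Z : C} (f : Y ⟶ X) (g : Z ⟶ Y) where
  obj : C
  π : obj ⟶ X
  /-- domain of the counit: a pullback of `f` along `π` -/
  cod : C
  codFst : cod ⟶ obj
  codSnd : cod ⟶ Y
  cod_isPullback : IsPullback codFst codSnd π f
  /-- the counit `f^*(f_* g) ⟶ g`, a morphism over `Y` -/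
  ε : cod ⟶ Z
  ε_comm : ε ≫ g = codSnd
  /-- transposition: a map `f^* h ⟶ g` over `Y` induces a map `h ⟶ f_* g` over `X` -/
  lift : ∀ {A Q : C} (h : A ⟶ X) (qf : Q ⟶ A) (qs : Q ⟶ Y),
    IsPullback qf qs h f → ∀ (k : Q ⟶ Z), k ≫ g = qs → (A ⟶ obj)
  lift_π : ∀ {A Q : C} (h : A ⟶ X) (qf : Q ⟶ A) (qs : Q ⟶ Y)
    (hq : IsPullback qf qs h f) (k : Q ⟶ Z) (hk : k ≫ g = qs),
    lift h qf qs hq k hk ≫ π = h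
  lift_ε : ∀ {A Q : C} (h : A ⟶ X) (qf : Q ⟶ A) (qs : Q ⟶ Y)
    (hq : IsPullback qf qs h f) (k : Q ⟶ Z) (hk : k ≫ g = qs),
    cod_isPullback.lift (qf ≫ lift h qf qs hq k hk) qs
      (by rw [Category.assoc, lift_π h qf qs hq k hk, hq.w]) ≫ ε = k
  lift_unique : ∀ {A Q : C} (h : A ⟶ X) (qf : Q ⟶ A) (qs : Q ⟶ Y)
    (hq : IsPullback qf qs h f) (k : Q ⟶ Z) (hk : k ≫ g = qs)
    (m : A ⟶ obj) (hm : m ≫ π = h),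
    cod_isPullback.lift (qf ≫ m) qs (by rw [Category.assoc, hm, hq.w]) ≫ ε = k →
    m = lift h qf qs hq k hk

end Paper

namespace Paper

open CategoryTheory Limits

universe v u

variable {C : Type u} [Category.{v} C]

/-- A π-clan: a class `R` of maps containing all isomorphisms, closed under
composition, stable under pullback (pullbacks of `R`-maps along arbitrary maps
exist), closed under pushforward (with chosen pushforward data), together with a
terminal object for which every map `X ⟶ 1` is an `R`-map. -/
structure PiClan (C : Type u) [Category.{v} C] where
  R : MorphismProperty C
  hasPb : ∀ {A X Y : C} (h : A ⟶ X) (f : Y ⟶ X), R f → HasPullback h f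
  isoMem : ∀ {X Y : C} (e : X ⟶ Y), IsIso e → R e
  compMem : ∀ {X Y Z : C} (f : X ⟶ Y) (g : Y ⟶ Z), R f → R g → R (f ≫ g)
  pbMem : ∀ {P A X Y : C} {fst : P ⟶ A} {snd : P ⟶ Y} {h : A ⟶ X} {f : Y ⟶ X},
    IsPullback fst snd h f → R f → R fst
  push : ∀ {X Y Z : C} (f : Y ⟶ X) (g : Z ⟶ Y), R f → R g → Pushforward f g
  pushMem : ∀ {X Y Z : C} (f : Y ⟶ X) (g : Z ⟶ Y) (hf : R f) (hg : R g),
    R (push f g hf hg).π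
  term : C
  isTerm : IsTerminal term
  allObj : ∀ X : C, R (isTerm.from X)

namespace PiClan

variable (D : PiClan C)

/-- The chosen pullback of an `R`-map `f` along an arbitrary map `h`. -/
noncomputable def pb {A X Y : C} (h : A ⟶ X) (f : Y ⟶ X) (hf : D.R f) : C :=
  haveI := D.hasPb h f hf
  pullback h f

noncomputable def pbFst {A X Y : C} (h : A ⟶ X) (f : Y ⟶ X) (hf : D.R f) :
    D.pb h f hf ⟶ A :=
  haveI := D.hasPb h f hf
  pullback.fst h f

noncomputable def pbSnd {A X Y : C} (h : A ⟶ X) (f : Y ⟶ X) (hf : D.R f) :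
    D.pb h f hf ⟶ Y :=
  haveI := D.hasPb h f hf
  pullback.snd h f

lemma pb_isPullback {A X Y : C} (h : A ⟶ X) (f : Y ⟶ X) (hf : D.R f) :
    IsPullback (D.pbFst h f hf) (D.pbSnd h f hf) h f :=
  haveI := D.hasPb h f hf
  IsPullback.of_hasPullback h f

/-- The pullback of an `R`-map is an `R`-map. -/
lemma pbFst_mem {A X Y : C} (h : A ⟶ X) (f : Y ⟶ X) (hf : D.R f) :
    D.R (D.pbFst h f hf) :=
  D.pbMem (D.pb_isPullback h f hf) hf

lemma pbSnd_mem {A X Y : C} (h : A ⟶ X) (f : Y ⟶ X) (hf : D.R f) (hh : D.R h) :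
    D.R (D.pbSnd h f hf) :=
  D.pbMem (D.pb_isPullback h f hf).flip hh

/-- Reindexing of pullbacks along a map of bases (`σ ×_X Y`). -/
noncomputable def pbMapLeft {A' A X Y : C} (σ : A' ⟶ A) (h : A ⟶ X) (f : Y ⟶ X)
    (hf : D.R f) : D.pb (σ ≫ h) f hf ⟶ D.pb h f hf :=
  (D.pb_isPullback h f hf).lift (D.pbFst (σ ≫ h) f hf ≫ σ) (D.pbSnd (σ ≫ h) f hf)
    (by rw [Category.assoc, ← (D.pb_isPullback (σ ≫ h) f hf).w])

/-- The map on pullbacks induced by a morphism `t : g₁ ⟶ g₂` over `X`. -/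
noncomputable def pbMapRight {A X Z₁ Z₂ : C} (h : A ⟶ X) (g₁ : Z₁ ⟶ X) (g₂ : Z₂ ⟶ X)
    (hg₁ : D.R g₁) (hg₂ : D.R g₂) (t : Z₁ ⟶ Z₂) (ht : t ≫ g₂ = g₁) :
    D.pb h g₁ hg₁ ⟶ D.pb h g₂ hg₂ :=
  (D.pb_isPullback h g₂ hg₂).lift (D.pbFst h g₁ hg₁) (D.pbSnd h g₁ hg₁ ≫ t)
    (by rw [Category.assoc, ht, (D.pb_isPullback h g₁ hg₁).w])

@[simp] lemma pbMapRight_fst {A X Z₁ Z₂ : C} (h : A ⟶ X) (g₁ : Z₁ ⟶ X) (g₂ : Z₂ ⟶ X)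
    (hg₁ : D.R g₁) (hg₂ : D.R g₂) (t : Z₁ ⟶ Z₂) (ht : t ≫ g₂ = g₁) :
    D.pbMapRight h g₁ g₂ hg₁ hg₂ t ht ≫ D.pbFst h g₂ hg₂ = D.pbFst h g₁ hg₁ :=
  (D.pb_isPullback h g₂ hg₂).lift_fst _ _ _

/-- The map on pullbacks induced on the `R`-map legs by `ρ` with `ρ ≫ f' = f`,
i.e. `h ×_X ρ : h ×_X f ⟶ h ×_X f'`. -/
noncomputable def pbMapOver {A X E E' : C} (h : A ⟶ X) (f : E ⟶ X) (f' : E' ⟶ X)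
    (hf : D.R f) (hf' : D.R f') (ρ : E ⟶ E') (w : ρ ≫ f' = f) :
    D.pb h f hf ⟶ D.pb h f' hf' :=
  (D.pb_isPullback h f' hf').lift (D.pbFst h f hf) (D.pbSnd h f hf ≫ ρ)
    (by rw [Category.assoc, w, (D.pb_isPullback h f hf).w])

/-- Functorial action of the pushforward `f_*` on a morphism `t : g₁ ⟶ g₂` of `R(Y)`. -/
noncomputable def pushMap {X Y Z₁ Z₂ : C} (f : Y ⟶ X) (g₁ : Z₁ ⟶ Y) (g₂ : Z₂ ⟶ Y)
    (hf : D.R f) (hg₁ : D.R g₁) (hg₂ : D.R g₂) (t : Z₁ ⟶ Z₂) (ht : t ≫ g₂ = g₁) :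
    (D.push f g₁ hf hg₁).obj ⟶ (D.push f g₂ hf hg₂).obj :=
  (D.push f g₂ hf hg₂).lift (D.push f g₁ hf hg₁).π
    (D.push f g₁ hf hg₁).codFst (D.push f g₁ hf hg₁).codSnd
    (D.push f g₁ hf hg₁).cod_isPullback ((D.push f g₁ hf hg₁).ε ≫ t)
    (by rw [Category.assoc, ht, (D.push f g₁ hf hg₁).ε_comm])

@[simp] lemma pushMap_π {X Y Z₁ Z₂ : C} (f : Y ⟶ X) (g₁ : Z₁ ⟶ Y) (g₂ : Z₂ ⟶ Y)
    (hf : D.R f) (hg₁ : D.R g₁) (hg₂ : D.R g₂) (t : Z₁ ⟶ Z₂) (ht : t ≫ g₂ = g₁) :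
    D.pushMap f g₁ g₂ hf hg₁ hg₂ t ht ≫ (D.push f g₂ hf hg₂).π =
      (D.push f g₁ hf hg₁).π :=
  (D.push f g₂ hf hg₂).lift_π _ _ _ _ _ _

section Polynomial

/-- The base change `E^* X` of `X` to an object over `E`, i.e. the product `E × X`
realized as a pullback over the terminal object. -/
noncomputable def estar (E X : C) : C :=
  D.pb (D.isTerm.from X) (D.isTerm.from E) (D.allObj E)

noncomputable def estarFst (E X : C) : D.estar E X ⟶ X :=
  D.pbFst (D.isTerm.from X) (D.isTerm.from E) (D.allObj E)

noncomputable def estarSnd (E X : C) : D.estar E X ⟶ E :=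
  D.pbSnd (D.isTerm.from X) (D.isTerm.from E) (D.allObj E)

lemma estarSnd_mem (E X : C) : D.R (D.estarSnd E X) :=
  D.pbSnd_mem _ _ _ (D.allObj X)

/-- The pushforward stage of the polynomial functor `P_f` applied to `X`:
`f_* (E^* X)` as an object over `B`. -/
noncomputable def polyPush {E B : C} (f : E ⟶ B) (hf : D.R f) (X : C) :
    Pushforward f (D.estarSnd E X) :=
  D.push f (D.estarSnd E X) hf (D.estarSnd_mem E X)

/-- The object `P_f X = B_! (f_* (E^* X))` of the polynomial functor. -/
noncomputable def polyObj {E B : C} (f : E ⟶ B) (hf : D.R f) (X : C) : C :=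
  (D.polyPush f hf X).obj

/-- The universal first projection `fstProj : P_f X ⟶ B`. -/
noncomputable def fstProj {E B : C} (f : E ⟶ B) (hf : D.R f) (X : C) :
    D.polyObj f hf X ⟶ B :=
  (D.polyPush f hf X).π

/-- The universal second projection `sndProj : fstProj ×_B f ⟶ X`. -/
noncomputable def sndProj {E B : C} (f : E ⟶ B) (hf : D.R f) (X : C) :
    D.pb (D.fstProj f hf X) f hf ⟶ X :=
  (D.polyPush f hf X).cod_isPullback.lift (D.pbFst (D.fstProj f hf X) f hf)
      (D.pbSnd (D.fstProj f hf X) f hf) (D.pb_isPullback (D.fstProj f hf X) f hf).w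
    ≫ (D.polyPush f hf X).ε ≫ D.estarFst E X

/-- The second component of a generalized element `t : Γ ⟶ P_f X`, relative to a
chosen presentation `g` of its first component. -/
noncomputable def polySndAt {E B : C} (f : E ⟶ B) (hf : D.R f) (X : C) {Γ : C}
    (g : Γ ⟶ B) (t : Γ ⟶ D.polyObj f hf X) (ht : t ≫ D.fstProj f hf X = g) :
    D.pb g f hf ⟶ X :=
  (D.pb_isPullback (D.fstProj f hf X) f hf).lift (D.pbFst g f hf ≫ t) (D.pbSnd g f hf)
      (by rw [Category.assoc, ht]; exact (D.pb_isPullback g f hf).w)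
    ≫ D.sndProj f hf X

/-- The second component `snd(t) = (t ×_B f) ≫ sndProj` of `t : Γ ⟶ P_f X`. -/
noncomputable def polySnd {E B : C} (f : E ⟶ B) (hf : D.R f) (X : C) {Γ : C}
    (t : Γ ⟶ D.polyObj f hf X) : D.pb (t ≫ D.fstProj f hf X) f hf ⟶ X :=
  D.polySndAt f hf X (t ≫ D.fstProj f hf X) t rfl

/-- The generalized element `Γ ⟶ P_f X` classifying a pair `(g, x)`. -/
noncomputable def polyPair {E B : C} (f : E ⟶ B) (hf : D.R f) (X : C) {Γ : C}
    (g : Γ ⟶ B) (x : D.pb g f hf ⟶ X) : Γ ⟶ D.polyObj f hf X :=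
  (D.polyPush f hf X).lift g (D.pbFst g f hf) (D.pbSnd g f hf) (D.pb_isPullback g f hf)
    ((D.pb_isPullback (D.isTerm.from X) (D.isTerm.from E) (D.allObj E)).lift
      x (D.pbSnd g f hf) (D.isTerm.hom_ext _ _))
    ((D.pb_isPullback (D.isTerm.from X) (D.isTerm.from E) (D.allObj E)).lift_snd _ _ _)

@[simp] lemma polyPair_fst {E B : C} (f : E ⟶ B) (hf : D.R f) (X : C) {Γ : C}
    (g : Γ ⟶ B) (x : D.pb g f hf ⟶ X) :
    D.polyPair f hf X g x ≫ D.fstProj f hf X = g :=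
  (D.polyPush f hf X).lift_π _ _ _ _ _ _

/-- The functorial action of the polynomial functor `P_f` on `u : X ⟶ X'`. -/
noncomputable def polyMap {E B : C} (f : E ⟶ B) (hf : D.R f) {X X' : C} (u : X ⟶ X') :
    D.polyObj f hf X ⟶ D.polyObj f hf X' :=
  D.polyPair f hf X' (D.fstProj f hf X) (D.sndProj f hf X ≫ u)

/-- The domain of the polynomial composition `f' ▷ f`. -/
noncomputable def compDom {E B E' B' : C} (f : E ⟶ B) (hf : D.R f)
    (f' : E' ⟶ B') (hf' : D.R f') : C :=
  D.pb (D.sndProj f hf B') f' hf'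

/-- The polynomial composition `f' ▷ f : compDom ⟶ P_f B'`. -/
noncomputable def polyComp {E B E' B' : C} (f : E ⟶ B) (hf : D.R f)
    (f' : E' ⟶ B') (hf' : D.R f') : D.compDom f hf f' hf' ⟶ D.polyObj f hf B' :=
  D.pbFst (D.sndProj f hf B') f' hf' ≫ D.pbFst (D.fstProj f hf B') f hf

/-- The map into `fstProj ×_B f` classifying `(polyPair g x, a)`. -/
noncomputable def polyMid {E B : C} (f : E ⟶ B) (hf : D.R f) (X : C) {Γ : C}
    (g : Γ ⟶ B) (x : D.pb g f hf ⟶ X) (a : Γ ⟶ E) (ha : a ≫ f = g) :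
    Γ ⟶ D.pb (D.fstProj f hf X) f hf :=
  (D.pb_isPullback (D.fstProj f hf X) f hf).lift (D.polyPair f hf X g x) a
    (by rw [D.polyPair_fst]; exact ha.symm)

/-- The generalized element of `compDom` classifying `(g, x, a, b)`. -/
noncomputable def compDomPair {E B E' B' : C} (f : E ⟶ B) (hf : D.R f)
    (f' : E' ⟶ B') (hf' : D.R f') {Γ : C} (g : Γ ⟶ B) (x : D.pb g f hf ⟶ B')
    (a : Γ ⟶ E) (ha : a ≫ f = g) (b : Γ ⟶ E')
    (hb : b ≫ f' = D.polyMid f hf B' g x a ha ≫ D.sndProj f hf B') :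
    Γ ⟶ D.compDom f hf f' hf' :=
  (D.pb_isPullback (D.sndProj f hf B') f' hf').lift
    (D.polyMid f hf B' g x a ha) b hb.symm

end Polynomial

end PiClan

/-- The principal class generated by `t`: all morphisms arising as a pullback of `t`. -/
def principal {Y X : C} (t : Y ⟶ X) : MorphismProperty C :=
  fun E B f => ∃ (top : E ⟶ Y) (base : B ⟶ X), IsPullback top f t base

/-- The property of being a π-preclan (Prop-valued, existence form). -/
structure IsPiPreclan (R : MorphismProperty C) : Prop where
  hasPb : ∀ {A X Y : C} (h : A ⟶ X) (f : Y ⟶ X), R f → HasPullback h f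
  pbMem : ∀ {P A X Y : C} {fst : P ⟶ A} {snd : P ⟶ Y} {h : A ⟶ X} {f : Y ⟶ X},
    IsPullback fst snd h f → R f → R fst
  isoMem : ∀ {X Y : C} (e : X ⟶ Y), IsIso e → R e
  compMem : ∀ {X Y Z : C} (f : X ⟶ Y) (g : Y ⟶ Z), R f → R g → R (f ≫ g)
  pushClosed : ∀ {X Y Z : C} (f : Y ⟶ X) (g : Z ⟶ Y), R f → R g →
    ∃ p : Pushforward f g, R p.π

/-- The property of being a π-clan (Prop-valued): a π-preclan on a category with a
terminal object in which every map to a terminal object belongs to the class. -/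
structure IsPiClan (R : MorphismProperty C) : Prop where
  toIsPiPreclan : IsPiPreclan R
  exists_terminal : ∃ T : C, Nonempty (IsTerminal T)
  allObj : ∀ {X T : C}, IsTerminal T → ∀ f : X ⟶ T, R f

end Paper

namespace Paper

open CategoryTheory Limits

namespace Pushforward

variable {C : Type*} [Category C] {X Y Z : C} {f : Y ⟶ X} {g : Z ⟶ Y}

/-- The canonical comparison map into `Q.cod` associated to a transposed lift. -/
noncomputable def mate (Q : Pushforward f g) {A Q' : C} (h : A ⟶ X) (qf : Q' ⟶ A)
    (qs : Q' ⟶ Y) (hq : IsPullback qf qs h f) (k : Q' ⟶ Z) (hk : k ≫ g = qs) :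
    Q' ⟶ Q.cod :=
  Q.cod_isPullback.lift (qf ≫ Q.lift h qf qs hq k hk) qs
    (by rw [Category.assoc, Q.lift_π, hq.w])

@[simp] lemma mate_codFst (Q : Pushforward f g) {A Q' : C} (h : A ⟶ X) (qf : Q' ⟶ A)
    (qs : Q' ⟶ Y) (hq : IsPullback qf qs h f) (k : Q' ⟶ Z) (hk : k ≫ g = qs) :
    Q.mate h qf qs hq k hk ≫ Q.codFst = qf ≫ Q.lift h qf qs hq k hk :=
  Q.cod_isPullback.lift_fst _ _ _

@[simp] lemma mate_codSnd (Q : Pushforward f g) {A Q' : C} (h : A ⟶ X) (qf : Q' ⟶ A)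
    (qs : Q' ⟶ Y) (hq : IsPullback qf qs h f) (k : Q' ⟶ Z) (hk : k ≫ g = qs) :
    Q.mate h qf qs hq k hk ≫ Q.codSnd = qs :=
  Q.cod_isPullback.lift_snd _ _ _

@[simp] lemma mate_ε (Q : Pushforward f g) {A Q' : C} (h : A ⟶ X) (qf : Q' ⟶ A)
    (qs : Q' ⟶ Y) (hq : IsPullback qf qs h f) (k : Q' ⟶ Z) (hk : k ≫ g = qs) :
    Q.mate h qf qs hq k hk ≫ Q.ε = k :=
  Q.lift_ε h qf qs hq k hk

/-- Master uniqueness lemma: a map agreeing with the universal lift (as witnessed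
by an explicit comparison `σ` into `Q.cod`) equals the universal lift. -/
lemma lift_eq (Q : Pushforward f g) {A Q' : C} (h : A ⟶ X) (qf : Q' ⟶ A)
    (qs : Q' ⟶ Y) (hq : IsPullback qf qs h f) (k : Q' ⟶ Z) (hk : k ≫ g = qs)
    (μ : A ⟶ Q.obj) (hμ : μ ≫ Q.π = h) (σ : Q' ⟶ Q.cod)
    (hσf : σ ≫ Q.codFst = qf ≫ μ) (hσs : σ ≫ Q.codSnd = qs) (hσε : σ ≫ Q.ε = k) :
    μ = Q.lift h qf qs hq k hk := by
  refine Q.lift_unique h qf qs hq k hk μ hμ ?_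
  have hlift : Q.cod_isPullback.lift (qf ≫ μ) qs
      (by rw [Category.assoc, hμ, hq.w]) = σ :=
    Q.cod_isPullback.hom_ext
      (by rw [Q.cod_isPullback.lift_fst, hσf])
      (by rw [Q.cod_isPullback.lift_snd, hσs])
  rw [hlift, hσε]

/-- The canonical comparison map between two pushforwards of the same map. -/
noncomputable def compare (P₁ P₂ : Pushforward f g) : P₁.obj ⟶ P₂.obj :=
  P₂.lift P₁.π P₁.codFst P₁.codSnd P₁.cod_isPullback P₁.ε P₁.ε_comm

lemma compare_π (P₁ P₂ : Pushforward f g) : compare P₁ P₂ ≫ P₂.π = P₁.π :=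
  P₂.lift_π _ _ _ _ _ _

lemma compare_self (P₁ : Pushforward f g) : compare P₁ P₁ = 𝟙 P₁.obj :=
  (lift_eq P₁ P₁.π P₁.codFst P₁.codSnd P₁.cod_isPullback P₁.ε P₁.ε_comm
    (𝟙 P₁.obj) (Category.id_comp _) (𝟙 P₁.cod)
    (by rw [Category.id_comp, Category.comp_id])
    (Category.id_comp _) (Category.id_comp _)).symm

lemma compare_comp (P₁ P₂ P₃ : Pushforward f g) :
    compare P₁ P₂ ≫ compare P₂ P₃ = compare P₁ P₃ :=
  lift_eq P₃ P₁.π P₁.codFst P₁.codSnd P₁.cod_isPullback P₁.ε P₁.ε_comm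
    (compare P₁ P₂ ≫ compare P₂ P₃)
    (by rw [Category.assoc, compare_π, compare_π])
    (P₂.mate P₁.π P₁.codFst P₁.codSnd P₁.cod_isPullback P₁.ε P₁.ε_comm ≫
      P₃.mate P₂.π P₂.codFst P₂.codSnd P₂.cod_isPullback P₂.ε P₂.ε_comm)
    (by rw [Category.assoc, mate_codFst, ← Category.assoc, mate_codFst,
        Category.assoc]; rfl)
    (by rw [Category.assoc, mate_codSnd, mate_codSnd])
    (by rw [Category.assoc, mate_ε, mate_ε])

/-- Two pushforwards of the same map have canonically isomorphic total objects. -/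
noncomputable def isoCompare (P₁ P₂ : Pushforward f g) : P₁.obj ≅ P₂.obj where
  hom := compare P₁ P₂
  inv := compare P₂ P₁
  hom_inv_id := by rw [compare_comp, compare_self]
  inv_hom_id := by rw [compare_comp, compare_self]

section Comp

variable (P : Pushforward f g) {W : C} (h : W ⟶ Z)
  {E : C} (eF : E ⟶ P.cod) (eS : E ⟶ W) (hE : IsPullback eF eS P.ε h)
  (B : Pushforward P.codFst eF)

variable {A' Q' : C} (h' : A' ⟶ X) (qf : Q' ⟶ A') (qs : Q' ⟶ Y)
  (hq : IsPullback qf qs h' f) (k : Q' ⟶ W) (hk : k ≫ (h ≫ g) = qs)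

/-- First stage of the composite transposition: transpose `k ≫ h` along `f`. -/
noncomputable def compLiftR : A' ⟶ P.obj :=
  P.lift h' qf qs hq (k ≫ h) (by rw [Category.assoc]; exact hk)

lemma compLiftR_π : compLiftR P h h' qf qs hq k hk ≫ P.π = h' :=
  P.lift_π _ _ _ _ _ _

noncomputable def compLiftM : Q' ⟶ P.cod :=
  P.mate h' qf qs hq (k ≫ h) (by rw [Category.assoc]; exact hk)

lemma compLiftM_fst :
    compLiftM P h h' qf qs hq k hk ≫ P.codFst = qf ≫ compLiftR P h h' qf qs hq k hk :=
  P.mate_codFst _ _ _ _ _ _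

lemma compLiftM_snd : compLiftM P h h' qf qs hq k hk ≫ P.codSnd = qs :=
  P.mate_codSnd _ _ _ _ _ _

lemma compLiftM_ε : compLiftM P h h' qf qs hq k hk ≫ P.ε = k ≫ h :=
  P.mate_ε _ _ _ _ _ _

lemma compLift_isPullback :
    IsPullback qf (compLiftM P h h' qf qs hq k hk)
      (compLiftR P h h' qf qs hq k hk) P.codFst := by
  refine IsPullback.of_bot ?_ (compLiftM_fst P h h' qf qs hq k hk).symm P.cod_isPullback
  rw [compLiftM_snd, compLiftR_π]
  exact hq

noncomputable def compLiftK : Q' ⟶ E :=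
  hE.lift (compLiftM P h h' qf qs hq k hk) k (compLiftM_ε P h h' qf qs hq k hk)

lemma compLiftK_fst :
    compLiftK P h eF eS hE h' qf qs hq k hk ≫ eF = compLiftM P h h' qf qs hq k hk :=
  hE.lift_fst _ _ _

lemma compLiftK_snd : compLiftK P h eF eS hE h' qf qs hq k hk ≫ eS = k :=
  hE.lift_snd _ _ _

/-- The composite transposition. -/
noncomputable def compLift : A' ⟶ B.obj :=
  B.lift (compLiftR P h h' qf qs hq k hk) qf (compLiftM P h h' qf qs hq k hk)
    (compLift_isPullback P h h' qf qs hq k hk)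
    (compLiftK P h eF eS hE h' qf qs hq k hk)
    (compLiftK_fst P h eF eS hE h' qf qs hq k hk)

lemma compLift_Bπ :
    compLift P h eF eS hE B h' qf qs hq k hk ≫ B.π = compLiftR P h h' qf qs hq k hk :=
  B.lift_π _ _ _ _ _ _

lemma compLift_π :
    compLift P h eF eS hE B h' qf qs hq k hk ≫ (B.π ≫ P.π) = h' := by
  rw [← Category.assoc, compLift_Bπ, compLiftR_π]

lemma compLift_ε :
    (B.cod_isPullback.paste_vert P.cod_isPullback).lift
        (qf ≫ compLift P h eF eS hE B h' qf qs hq k hk) qs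
        (by rw [Category.assoc, compLift_π, hq.w]) ≫ (B.ε ≫ eS) = k := by
  set n := (B.cod_isPullback.paste_vert P.cod_isPullback).lift
      (qf ≫ compLift P h eF eS hE B h' qf qs hq k hk) qs
      (by rw [Category.assoc, compLift_π, hq.w]) with hn
  have hnf : n ≫ B.codFst = qf ≫ compLift P h eF eS hE B h' qf qs hq k hk :=
    (B.cod_isPullback.paste_vert P.cod_isPullback).lift_fst _ _ _
  have hns : n ≫ (B.codSnd ≫ P.codSnd) = qs :=
    (B.cod_isPullback.paste_vert P.cod_isPullback).lift_snd _ _ _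
  have hmate : n = B.mate (compLiftR P h h' qf qs hq k hk) qf
      (compLiftM P h h' qf qs hq k hk) (compLift_isPullback P h h' qf qs hq k hk)
      (compLiftK P h eF eS hE h' qf qs hq k hk)
      (compLiftK_fst P h eF eS hE h' qf qs hq k hk) := by
    refine B.cod_isPullback.hom_ext ?_ ?_
    · rw [hnf, B.mate_codFst]; rfl
    · rw [B.mate_codSnd]
      refine P.cod_isPullback.hom_ext ?_ ?_
      · calc (n ≫ B.codSnd) ≫ P.codFst
            = n ≫ (B.codSnd ≫ P.codFst) := by rw [Category.assoc]
          _ = n ≫ (B.codFst ≫ B.π) := by rw [B.cod_isPullback.w]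
          _ = (n ≫ B.codFst) ≫ B.π := by rw [Category.assoc]
          _ = qf ≫ compLift P h eF eS hE B h' qf qs hq k hk ≫ B.π := by
              rw [hnf, Category.assoc]
          _ = qf ≫ compLiftR P h h' qf qs hq k hk := by rw [compLift_Bπ]
          _ = compLiftM P h h' qf qs hq k hk ≫ P.codFst :=
              (compLiftM_fst P h h' qf qs hq k hk).symm
      · calc (n ≫ B.codSnd) ≫ P.codSnd
            = n ≫ (B.codSnd ≫ P.codSnd) := by rw [Category.assoc]
          _ = qs := hns
          _ = compLiftM P h h' qf qs hq k hk ≫ P.codSnd :=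
              (compLiftM_snd P h h' qf qs hq k hk).symm
  rw [← Category.assoc, hmate, B.mate_ε, compLiftK_snd]

lemma compLift_unique (m : A' ⟶ B.obj) (hm : m ≫ (B.π ≫ P.π) = h')
    (hyp : (B.cod_isPullback.paste_vert P.cod_isPullback).lift (qf ≫ m) qs
      (by rw [Category.assoc, hm, hq.w]) ≫ (B.ε ≫ eS) = k) :
    m = compLift P h eF eS hE B h' qf qs hq k hk := by
  set n := (B.cod_isPullback.paste_vert P.cod_isPullback).lift (qf ≫ m) qs
      (by rw [Category.assoc, hm, hq.w]) with hn
  have hnf : n ≫ B.codFst = qf ≫ m :=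
    (B.cod_isPullback.paste_vert P.cod_isPullback).lift_fst _ _ _
  have hns : n ≫ (B.codSnd ≫ P.codSnd) = qs :=
    (B.cod_isPullback.paste_vert P.cod_isPullback).lift_snd _ _ _
  have hnε : n ≫ (B.ε ≫ eS) = k := hyp
  -- Step 1 : m ≫ B.π = compLiftR
  have hstep1 : m ≫ B.π = compLiftR P h h' qf qs hq k hk := by
    refine lift_eq P h' qf qs hq (k ≫ h) (by rw [Category.assoc]; exact hk)
      (m ≫ B.π) (by rw [Category.assoc]; exact hm) (n ≫ B.codSnd) ?_ ?_ ?_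
    · calc (n ≫ B.codSnd) ≫ P.codFst
          = n ≫ (B.codSnd ≫ P.codFst) := by rw [Category.assoc]
        _ = (n ≫ B.codFst) ≫ B.π := by rw [← B.cod_isPullback.w, Category.assoc]
        _ = qf ≫ (m ≫ B.π) := by rw [hnf, Category.assoc]
    · rw [Category.assoc]; exact hns
    · calc (n ≫ B.codSnd) ≫ P.ε
          = n ≫ ((B.ε ≫ eF) ≫ P.ε) := by rw [B.ε_comm, Category.assoc]
        _ = n ≫ (B.ε ≫ (eS ≫ h)) := by rw [Category.assoc, hE.w]
        _ = (n ≫ (B.ε ≫ eS)) ≫ h := by simp only [Category.assoc]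
        _ = k ≫ h := by rw [hnε]
  -- Step 2 : conclude via B's uniqueness
  have hnsnd : n ≫ B.codSnd = compLiftM P h h' qf qs hq k hk := by
    refine P.cod_isPullback.hom_ext ?_ ?_
    · calc (n ≫ B.codSnd) ≫ P.codFst
          = (n ≫ B.codFst) ≫ B.π := by
            rw [Category.assoc, ← B.cod_isPullback.w, Category.assoc]
        _ = qf ≫ (m ≫ B.π) := by rw [hnf, Category.assoc]
        _ = qf ≫ compLiftR P h h' qf qs hq k hk := by rw [hstep1]
        _ = compLiftM P h h' qf qs hq k hk ≫ P.codFst :=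
            (compLiftM_fst P h h' qf qs hq k hk).symm
    · calc (n ≫ B.codSnd) ≫ P.codSnd
          = n ≫ (B.codSnd ≫ P.codSnd) := by rw [Category.assoc]
        _ = qs := hns
        _ = compLiftM P h h' qf qs hq k hk ≫ P.codSnd :=
            (compLiftM_snd P h h' qf qs hq k hk).symm
  refine lift_eq B (compLiftR P h h' qf qs hq k hk) qf
    (compLiftM P h h' qf qs hq k hk) (compLift_isPullback P h h' qf qs hq k hk)
    (compLiftK P h eF eS hE h' qf qs hq k hk)
    (compLiftK_fst P h eF eS hE h' qf qs hq k hk) m hstep1 n hnf hnsnd ?_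
  refine hE.hom_ext ?_ ?_
  · calc (n ≫ B.ε) ≫ eF
        = n ≫ (B.ε ≫ eF) := by rw [Category.assoc]
      _ = n ≫ B.codSnd := by rw [B.ε_comm]
      _ = compLiftM P h h' qf qs hq k hk := hnsnd
      _ = compLiftK P h eF eS hE h' qf qs hq k hk ≫ eF :=
          (compLiftK_fst P h eF eS hE h' qf qs hq k hk).symm
  · calc (n ≫ B.ε) ≫ eS
        = n ≫ (B.ε ≫ eS) := by rw [Category.assoc]
      _ = k := hnε
      _ = compLiftK P h eF eS hE h' qf qs hq k hk ≫ eS :=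
          (compLiftK_snd P h eF eS hE h' qf qs hq k hk).symm

/-- The composite of the pushforward `B` along `f'` with `P` along `f`, as a
pushforward of `h ≫ g` along `f`: this is the distributivity construction. -/
noncomputable def comp : Pushforward f (h ≫ g) where
  obj := B.obj
  π := B.π ≫ P.π
  cod := B.cod
  codFst := B.codFst
  codSnd := B.codSnd ≫ P.codSnd
  cod_isPullback := B.cod_isPullback.paste_vert P.cod_isPullback
  ε := B.ε ≫ eS
  ε_comm := by
    simp only [Category.assoc]
    rw [← Category.assoc eS h g, ← hE.w, Category.assoc, P.ε_comm, ← Category.assoc,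
      B.ε_comm]
  lift h' qf qs hq k hk := compLift P h eF eS hE B h' qf qs hq k hk
  lift_π h' qf qs hq k hk := compLift_π P h eF eS hE B h' qf qs hq k hk
  lift_ε h' qf qs hq k hk := compLift_ε P h eF eS hE B h' qf qs hq k hk
  lift_unique h' qf qs hq k hk m hm hyp :=
    compLift_unique P h eF eS hE B h' qf qs hq k hk m hm hyp

@[simp] lemma comp_obj : (comp P h eF eS hE B).obj = B.obj := rfl
@[simp] lemma comp_π : (comp P h eF eS hE B).π = B.π ≫ P.π := rfl
@[simp] lemma comp_codFst : (comp P h eF eS hE B).codFst = B.codFst := rfl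
@[simp] lemma comp_codSnd : (comp P h eF eS hE B).codSnd = B.codSnd ≫ P.codSnd := rfl
@[simp] lemma comp_ε : (comp P h eF eS hE B).ε = B.ε ≫ eS := rfl

end Comp

end Pushforward

end Paper

namespace Paper

open CategoryTheory Limits

namespace Pushforward

variable {C : Type*} [Category C] {X Y Z : C} {f : Y ⟶ X} {g : Z ⟶ Y}

/-- Naturality of the distributivity comparison. -/
lemma comp_natural (P : Pushforward f g) {W₁ W₂ : C} (h₁ : W₁ ⟶ Z) (h₂ : W₂ ⟶ Z)
    (t : W₁ ⟶ W₂) (ht : t ≫ h₂ = h₁)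
    {E₁ : C} (eF₁ : E₁ ⟶ P.cod) (eS₁ : E₁ ⟶ W₁) (hE₁ : IsPullback eF₁ eS₁ P.ε h₁)
    {E₂ : C} (eF₂ : E₂ ⟶ P.cod) (eS₂ : E₂ ⟶ W₂) (hE₂ : IsPullback eF₂ eS₂ P.ε h₂)
    (B₁ : Pushforward P.codFst eF₁) (B₂ : Pushforward P.codFst eF₂)
    (A₁ : Pushforward f (h₁ ≫ g)) (A₂ : Pushforward f (h₂ ≫ g))
    (pm : E₁ ⟶ E₂) (pmF : pm ≫ eF₂ = eF₁) (pmS : pm ≫ eS₂ = eS₁ ≫ t)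
    (pfA : (A₁.ε ≫ t) ≫ (h₂ ≫ g) = A₁.codSnd)
    (pfB : (B₁.ε ≫ pm) ≫ eF₂ = B₁.codSnd) :
    A₂.lift A₁.π A₁.codFst A₁.codSnd A₁.cod_isPullback (A₁.ε ≫ t) pfA ≫
        compare A₂ (comp P h₂ eF₂ eS₂ hE₂ B₂) =
      compare A₁ (comp P h₁ eF₁ eS₁ hE₁ B₁) ≫
        B₂.lift B₁.π B₁.codFst B₁.codSnd B₁.cod_isPullback (B₁.ε ≫ pm) pfB := by
  set s := A₂.lift A₁.π A₁.codFst A₁.codSnd A₁.cod_isPullback (A₁.ε ≫ t) pfA with hs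
  set pb := B₂.lift B₁.π B₁.codFst B₁.codSnd B₁.cod_isPullback (B₁.ε ≫ pm) pfB with hpb
  have lhs : s ≫ compare A₂ (comp P h₂ eF₂ eS₂ hE₂ B₂) =
      (comp P h₂ eF₂ eS₂ hE₂ B₂).lift A₁.π A₁.codFst A₁.codSnd A₁.cod_isPullback
        (A₁.ε ≫ t) pfA := by
    refine lift_eq (comp P h₂ eF₂ eS₂ hE₂ B₂) A₁.π A₁.codFst A₁.codSnd
      A₁.cod_isPullback (A₁.ε ≫ t) pfA _ ?_
      (A₂.mate A₁.π A₁.codFst A₁.codSnd A₁.cod_isPullback (A₁.ε ≫ t) pfA ≫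
        (comp P h₂ eF₂ eS₂ hE₂ B₂).mate A₂.π A₂.codFst A₂.codSnd A₂.cod_isPullback
          A₂.ε A₂.ε_comm) ?_ ?_ ?_
    · rw [Category.assoc, compare_π, hs, A₂.lift_π]
    · rw [Category.assoc, mate_codFst, ← Category.assoc, mate_codFst,
        Category.assoc]; rfl
    · rw [Category.assoc, mate_codSnd, mate_codSnd]
    · rw [Category.assoc, mate_ε, mate_ε]
  have rhs : compare A₁ (comp P h₁ eF₁ eS₁ hE₁ B₁) ≫ pb =
      (comp P h₂ eF₂ eS₂ hE₂ B₂).lift A₁.π A₁.codFst A₁.codSnd A₁.cod_isPullback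
        (A₁.ε ≫ t) pfA := by
    refine lift_eq (comp P h₂ eF₂ eS₂ hE₂ B₂) A₁.π A₁.codFst A₁.codSnd
      A₁.cod_isPullback (A₁.ε ≫ t) pfA _ ?_
      ((show A₁.cod ⟶ B₁.cod from
          (comp P h₁ eF₁ eS₁ hE₁ B₁).mate A₁.π A₁.codFst A₁.codSnd A₁.cod_isPullback
            A₁.ε A₁.ε_comm) ≫
        B₂.mate B₁.π B₁.codFst B₁.codSnd B₁.cod_isPullback (B₁.ε ≫ pm) pfB)
      ?_ ?_ ?_
    · show (compare A₁ (comp P h₁ eF₁ eS₁ hE₁ B₁) ≫ pb) ≫ (B₂.π ≫ P.π) = A₁.π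
      erw [Category.assoc, ← Category.assoc pb, hpb, B₂.lift_π]
      exact compare_π A₁ (comp P h₁ eF₁ eS₁ hE₁ B₁)
    · show _ ≫ B₂.codFst = _
      erw [Category.assoc, mate_codFst, ← Category.assoc]
      have : (comp P h₁ eF₁ eS₁ hE₁ B₁).mate A₁.π A₁.codFst A₁.codSnd
          A₁.cod_isPullback A₁.ε A₁.ε_comm ≫ B₁.codFst =
          A₁.codFst ≫ compare A₁ (comp P h₁ eF₁ eS₁ hE₁ B₁) :=
        mate_codFst _ _ _ _ _ _ _
      erw [this, Category.assoc]; rfl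
    · show _ ≫ (B₂.codSnd ≫ P.codSnd) = A₁.codSnd
      erw [Category.assoc, ← Category.assoc (B₂.mate _ _ _ _ _ _), mate_codSnd]
      exact mate_codSnd _ _ _ _ _ _ _
    · show _ ≫ (B₂.ε ≫ eS₂) = A₁.ε ≫ t
      erw [Category.assoc, ← Category.assoc (B₂.mate _ _ _ _ _ _), mate_ε,
        Category.assoc, pmS, ← Category.assoc]
      have : (comp P h₁ eF₁ eS₁ hE₁ B₁).mate A₁.π A₁.codFst A₁.codSnd
          A₁.cod_isPullback A₁.ε A₁.ε_comm ≫ (B₁.ε ≫ eS₁) = A₁.ε :=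
        mate_ε _ _ _ _ _ _ _
      erw [← Category.assoc] at this
      erw [← Category.assoc]
      exact congrArg (fun z => z ≫ t) this
  erw [lhs, rhs]

end Pushforward

end Paper

open CategoryTheory Limits Paper in
/-- distributivity law: for `R`-maps `g : Z ⟶ Y` and `f : Y ⟶ X` in a
π-clan, with `q := f_* g`, `f'` the pullback of `f` along `q` and `ε` the counit of
`f^* ⊣ f_*` at `g`, there is a canonical natural isomorphism
`g_! ≫ f_* ≅ ε^* ≫ f'_* ≫ q_!` of functors `R(Z) ⟶ R(X)` (given here by its
components, which are morphisms over `X`, natural in the object `h` of `R(Z)`). -/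
theorem distributivity {C : Type*} [Category C] (D : PiClan C)
    {X Y Z : C} (g : Z ⟶ Y) (f : Y ⟶ X) (hg : D.R g) (hf : D.R f) :
    ∃ ι : ∀ (W : C) (h : W ⟶ Z) (hh : D.R h),
        (D.push f (h ≫ g) hf (D.compMem h g hh hg)).obj ≅
        (D.push (D.push f g hf hg).codFst
          (D.pbFst (D.push f g hf hg).ε h hh)
          (D.pbMem (D.push f g hf hg).cod_isPullback hf)
          (D.pbFst_mem (D.push f g hf hg).ε h hh)).obj,
      -- the components are morphisms over X (through q_!)
      (∀ (W : C) (h : W ⟶ Z) (hh : D.R h),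
        (ι W h hh).hom ≫
          ((D.push (D.push f g hf hg).codFst
              (D.pbFst (D.push f g hf hg).ε h hh)
              (D.pbMem (D.push f g hf hg).cod_isPullback hf)
              (D.pbFst_mem (D.push f g hf hg).ε h hh)).π ≫
            (D.push f g hf hg).π) =
          (D.push f (h ≫ g) hf (D.compMem h g hh hg)).π) ∧
      -- naturality in h
      (∀ {W₁ W₂ : C} (h₁ : W₁ ⟶ Z) (h₂ : W₂ ⟶ Z) (hh₁ : D.R h₁) (hh₂ : D.R h₂)
         (t : W₁ ⟶ W₂) (ht : t ≫ h₂ = h₁),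
        D.pushMap f (h₁ ≫ g) (h₂ ≫ g) hf
            (D.compMem h₁ g hh₁ hg) (D.compMem h₂ g hh₂ hg) t
            (by rw [← Category.assoc, ht]) ≫ (ι W₂ h₂ hh₂).hom =
          (ι W₁ h₁ hh₁).hom ≫
            D.pushMap (D.push f g hf hg).codFst
              (D.pbFst (D.push f g hf hg).ε h₁ hh₁)
              (D.pbFst (D.push f g hf hg).ε h₂ hh₂)
              (D.pbMem (D.push f g hf hg).cod_isPullback hf)
              (D.pbFst_mem (D.push f g hf hg).ε h₁ hh₁)
              (D.pbFst_mem (D.push f g hf hg).ε h₂ hh₂)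
              (D.pbMapRight (D.push f g hf hg).ε h₁ h₂ hh₁ hh₂ t ht)
              (D.pbMapRight_fst (D.push f g hf hg).ε h₁ h₂ hh₁ hh₂ t ht)) := by
  refine ⟨fun W h hh =>
    Pushforward.isoCompare (D.push f (h ≫ g) hf (D.compMem h g hh hg))
      (Pushforward.comp (D.push f g hf hg) h
        (D.pbFst (D.push f g hf hg).ε h hh) (D.pbSnd (D.push f g hf hg).ε h hh)
        (D.pb_isPullback (D.push f g hf hg).ε h hh)
        (D.push (D.push f g hf hg).codFst (D.pbFst (D.push f g hf hg).ε h hh)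
          (D.pbMem (D.push f g hf hg).cod_isPullback hf)
          (D.pbFst_mem (D.push f g hf hg).ε h hh))),
    fun W h hh => Pushforward.compare_π (D.push f (h ≫ g) hf (D.compMem h g hh hg))
      (Pushforward.comp (D.push f g hf hg) h
        (D.pbFst (D.push f g hf hg).ε h hh) (D.pbSnd (D.push f g hf hg).ε h hh)
        (D.pb_isPullback (D.push f g hf hg).ε h hh)
        (D.push (D.push f g hf hg).codFst (D.pbFst (D.push f g hf hg).ε h hh)
          (D.pbMem (D.push f g hf hg).cod_isPullback hf)
          (D.pbFst_mem (D.push f g hf hg).ε h hh))),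
    fun {W₁ W₂} h₁ h₂ hh₁ hh₂ t ht => ?_⟩
  exact Pushforward.comp_natural (D.push f g hf hg) h₁ h₂ t ht
    (D.pbFst _ h₁ hh₁) (D.pbSnd _ h₁ hh₁) (D.pb_isPullback _ h₁ hh₁)
    (D.pbFst _ h₂ hh₂) (D.pbSnd _ h₂ hh₂) (D.pb_isPullback _ h₂ hh₂)
    (D.push _ _ (D.pbMem (D.push f g hf hg).cod_isPullback hf)
      (D.pbFst_mem (D.push f g hf hg).ε h₁ hh₁))
    (D.push _ _ (D.pbMem (D.push f g hf hg).cod_isPullback hf)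
      (D.pbFst_mem (D.push f g hf hg).ε h₂ hh₂))
    (D.push f (h₁ ≫ g) hf (D.compMem h₁ g hh₁ hg))
    (D.push f (h₂ ≫ g) hf (D.compMem h₂ g hh₂ hg))
    (D.pbMapRight _ h₁ h₂ hh₁ hh₂ t ht)
    (D.pbMapRight_fst _ h₁ h₂ hh₁ hh₂ t ht)
    ((D.pb_isPullback _ h₂ hh₂).lift_snd _ _ _)
    _ _
end

section
/- Let g : Z ⟶ Y and f : Y ⟶ X be R-maps in a π-clan (C, R); set q := f_* g, let f' : f ×_X q ⟶ f_* Z be the pullback of f along q and ε : f ×_X q ⟶ Z the counit of f^* ⊣ f_* at g. Suppose h : W ⟶ Z is an R-map which is a morphism between objects W and Z of R(Y). Let H be any class of maps in C stable under pre- and post-composition with isomorphisms. Then f_* h (the image of h under the pushforward functor f_* : R(Y) ⟶ R(X)) is an H-map if and only if the underlying map of the object f'_*(ε^* h) of R(f_* Z) is an H-map. -/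
/-! The distributivity law says that `f'_* (ε^* h)`, regarded over `X` through `q`, is itself a
pushforward of `h ≫ g` along `f`. Pushforwards are unique up to isomorphism over `X`, and the
comparison isomorphism from `f_* (h ≫ g)` followed by the projection to `f_* Z` is `f_* h`, so
`f_* h` and the underlying map of `f'_* (ε^* h)` differ by an isomorphism. -/

open CategoryTheory in
lemma CategoryTheory.IsPullback.paste_vert_lift {C : Type*} [Category C]
    {X₁₁ X₁₂ X₂₁ X₂₂ X₃₁ X₃₂ V : C} {h₁₁ : X₁₁ ⟶ X₁₂} {h₂₁ : X₂₁ ⟶ X₂₂} {h₃₁ : X₃₁ ⟶ X₃₂}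
    {v₁₁ : X₁₁ ⟶ X₂₁} {v₁₂ : X₁₂ ⟶ X₂₂} {v₂₁ : X₂₁ ⟶ X₃₁} {v₂₂ : X₂₂ ⟶ X₃₂}
    (t : IsPullback h₁₁ v₁₁ v₁₂ h₂₁) (b : IsPullback h₂₁ v₂₁ v₂₂ h₃₁) (x : V ⟶ X₁₂)
    (y : V ⟶ X₃₁) (w : x ≫ v₁₂ ≫ v₂₂ = y ≫ h₃₁) :
    (t.paste_vert b).lift x y w =
      t.lift x (b.lift (x ≫ v₁₂) y (by rw [Category.assoc, w])) (by simp) :=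
  (t.paste_vert b).hom_ext (by simp) (by simp)

namespace Paper.Pushforward

open CategoryTheory Limits

universe v u

variable {C : Type u} [Category.{v} C]

section Uniqueness

variable {X Y Z : C} {f : Y ⟶ X} {g : Z ⟶ Y}

lemma isPullback_cod_lift (p : Pushforward f g) {A Q : C} {u : A ⟶ X} {qf : Q ⟶ A}
    {qs : Q ⟶ Y} (hq : IsPullback qf qs u f) (a : A ⟶ p.obj) (ha : a ≫ p.π = u) :
    IsPullback qf (p.cod_isPullback.lift (qf ≫ a) qs (by rw [Category.assoc, ha, hq.w]))
      a p.codFst := by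
  subst ha
  exact IsPullback.of_bot' hq p.cod_isPullback

/-- Naturality of transposition: reindexing `p.lift … k …` along `σ` transposes to `τ ≫ k`,
where `τ` is the induced map of pullbacks. -/
lemma lift_ε_comp (p : Pushforward f g) {A Q A' Q' : C} (u : A ⟶ X) (qf : Q ⟶ A)
    (qs : Q ⟶ Y) (hq : IsPullback qf qs u f) (k : Q ⟶ Z) (hk : k ≫ g = qs) (σ : A' ⟶ A)
    (qf' : Q' ⟶ A') (qs' : Q' ⟶ Y) (τ : Q' ⟶ Q) (hτf : τ ≫ qf = qf' ≫ σ) (hτs : τ ≫ qs = qs')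
    (w : (qf' ≫ σ ≫ p.lift u qf qs hq k hk) ≫ p.π = qs' ≫ f) :
    p.cod_isPullback.lift (qf' ≫ σ ≫ p.lift u qf qs hq k hk) qs' w ≫ p.ε = τ ≫ k := by
  have hlift : p.cod_isPullback.lift (qf' ≫ σ ≫ p.lift u qf qs hq k hk) qs' w =
      τ ≫ p.cod_isPullback.lift (qf ≫ p.lift u qf qs hq k hk) qs
        (by rw [Category.assoc, p.lift_π, hq.w]) :=
    p.cod_isPullback.hom_ext (by simp [reassoc_of% hτf]) (by simp [hτs])
  rw [hlift, Category.assoc, p.lift_ε]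

noncomputable def comparison (p₁ p₂ : Pushforward f g) : p₁.obj ⟶ p₂.obj :=
  p₂.lift p₁.π p₁.codFst p₁.codSnd p₁.cod_isPullback p₁.ε p₁.ε_comm

lemma comparison_π (p₁ p₂ : Pushforward f g) : comparison p₁ p₂ ≫ p₂.π = p₁.π :=
  p₂.lift_π _ _ _ _ _ _

lemma comparison_self (p : Pushforward f g) : comparison p p = 𝟙 p.obj := by
  refine (p.lift_unique _ _ _ _ _ _ _ (Category.id_comp _) ?_).symm
  rw [show p.cod_isPullback.lift (p.codFst ≫ 𝟙 _) p.codSnd _ = 𝟙 _ from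
    p.cod_isPullback.hom_ext (by simp) (by simp), Category.id_comp]

lemma comparison_comp_comparison (p₁ p₂ p₃ : Pushforward f g) :
    comparison p₁ p₂ ≫ comparison p₂ p₃ = comparison p₁ p₃ := by
  refine p₃.lift_unique _ _ _ _ _ _ _ (by rw [Category.assoc, comparison_π, comparison_π]) ?_
  refine (p₃.lift_ε_comp _ _ _ _ _ _ _ _ _ (p₂.cod_isPullback.lift (p₁.codFst ≫ comparison p₁ p₂)
    p₁.codSnd (by rw [Category.assoc, comparison_π]; exact p₁.cod_isPullback.w)) (by simp)
    (by simp) _).trans ?_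
  exact p₂.lift_ε _ _ _ _ _ _

noncomputable def uniqueUpToIso (p₁ p₂ : Pushforward f g) : p₁.obj ≅ p₂.obj where
  hom := comparison p₁ p₂
  inv := comparison p₂ p₁
  hom_inv_id := by rw [comparison_comp_comparison, comparison_self]
  inv_hom_id := by rw [comparison_comp_comparison, comparison_self]

end Uniqueness

section Distrib

variable {X Y Z W : C} {f : Y ⟶ X} {g : Z ⟶ Y} {h : W ⟶ Z} (P : Pushforward f g)
  {Pb : C} {e : Pb ⟶ P.cod} {s : Pb ⟶ W} (hpb : IsPullback e s P.ε h)
  (P' : Pushforward P.codFst e)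

/-- The distributivity law `g_! ≫ f_* ≅ ε^* ≫ f'_* ≫ q_!` at `h`, with `q := P.π`,
`f' := P.codFst` and `ε^* h := e`. -/
noncomputable def distrib : Pushforward f (h ≫ g) where
  obj := P'.obj
  π := P'.π ≫ P.π
  cod := P'.cod
  codFst := P'.codFst
  codSnd := P'.codSnd ≫ P.codSnd
  cod_isPullback := P'.cod_isPullback.paste_vert P.cod_isPullback
  ε := P'.ε ≫ s
  ε_comm := by rw [Category.assoc, ← hpb.w_assoc, reassoc_of% P'.ε_comm, P.ε_comm]
  lift u qf qs hq k hk :=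
    P'.lift (P.lift u qf qs hq (k ≫ h) (by rw [Category.assoc, hk])) qf _
      (P.isPullback_cod_lift hq _ (P.lift_π _ _ _ _ _ _))
      (hpb.lift _ k (P.lift_ε _ _ _ _ _ _)) (hpb.lift_fst _ _ _)
  lift_π u qf qs hq k hk := by rw [← Category.assoc, P'.lift_π, P.lift_π]
  lift_ε u qf qs hq k hk := by
    rw [IsPullback.paste_vert_lift P'.cod_isPullback P.cod_isPullback]
    simp only [Category.assoc, P'.lift_π]
    rw [← Category.assoc, P'.lift_ε, hpb.lift_snd]
  lift_unique u qf qs hq k hk m hm hmε := by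
    rw [IsPullback.paste_vert_lift P'.cod_isPullback P.cod_isPullback] at hmε
    have ha : m ≫ P'.π = P.lift u qf qs hq (k ≫ h) (by rw [Category.assoc, hk]) := by
      refine P.lift_unique _ _ _ _ _ _ _ (by rwa [Category.assoc]) ?_
      rw [← hmε]
      simp only [Category.assoc, ← hpb.w, reassoc_of% P'.ε_comm, IsPullback.lift_snd_assoc]
    refine P'.lift_unique _ _ _ _ _ _ m ha ?_
    apply hpb.hom_ext
    · simp only [Category.assoc, P'.ε_comm, IsPullback.lift_snd, IsPullback.lift_fst]
    · simp only [Category.assoc, ha] at hmε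
      rw [Category.assoc, hmε, IsPullback.lift_snd]

lemma distrib_lift_π {A Q : C} (u : A ⟶ X) (qf : Q ⟶ A) (qs : Q ⟶ Y)
    (hq : IsPullback qf qs u f) (k : Q ⟶ W) (hk : k ≫ h ≫ g = qs) :
    (P.distrib hpb P').lift u qf qs hq k hk ≫ P'.π =
      P.lift u qf qs hq (k ≫ h) (by rw [Category.assoc, hk]) :=
  P'.lift_π _ _ _ _ _ _

end Distrib

end Paper.Pushforward

open CategoryTheory Limits Paper in
/-- with `q := f_* g`, `f'` the pullback of `f` along `q` and `ε` the
counit of `f^* ⊣ f_*` at `g`, if `h : W ⟶ Z` is an `R`-map between objects `W` and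
`Z` of `R(Y)`, and `H` is a class of maps stable under pre- and post-composition
with isomorphisms, then `f_* h` is an `H`-map iff the underlying map of the object
`f'_* (ε^* h)` of `R(f_* Z)` is an `H`-map. -/
theorem pushforward_stability {C : Type*} [Category C] (D : PiClan C)
    {X Y Z W : C} (g : Z ⟶ Y) (f : Y ⟶ X) (hg : D.R g) (hf : D.R f)
    (h : W ⟶ Z) (hh : D.R h)
    (H : MorphismProperty C) (hH : H.RespectsIso) :
    H (D.pushMap f (h ≫ g) g hf (D.compMem h g hh hg) hg h rfl) ↔
    H ((D.push (D.push f g hf hg).codFst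
        (D.pbFst (D.push f g hf hg).ε h hh)
        (D.pbMem (D.push f g hf hg).cod_isPullback hf)
        (D.pbFst_mem (D.push f g hf hg).ε h hh)).π) := by
  set P := D.push f g hf hg
  set P' := D.push P.codFst (D.pbFst P.ε h hh) (D.pbMem P.cod_isPullback hf)
    (D.pbFst_mem P.ε h hh)
  set PW := D.push f (h ≫ g) hf (D.compMem h g hh hg)
  have hpb := D.pb_isPullback P.ε h hh
  let i := PW.uniqueUpToIso (P.distrib hpb P')
  have hi : i.hom ≫ P'.π = D.pushMap f (h ≫ g) g hf (D.compMem h g hh hg) hg h rfl :=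
    P.distrib_lift_π hpb P' PW.π PW.codFst PW.codSnd PW.cod_isPullback PW.ε PW.ε_comm
  rw [← hi]
  exact MorphismProperty.cancel_left_of_respectsIso H i.hom _
end

section
/- Let g' : P ⟶ X, f' : P ⟶ Y, f : X ⟶ Z, g : Y ⟶ Z form a commutative square g' ≫ f = f' ≫ g in a category C, and suppose this square admits a weak pullback structure. If the (strong) pullback of f and g exists in C, then the square admits a coherent weak pullback structure. -/
open CategoryTheory Limits Paper in
/-- if a commutative square admits a weak pullback structure and the
(strong) pullback of `f` and `g` exists, then the square admits a coherent weak
pullback structure. -/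
theorem exists_coherent_weakPullbackStr {C : Type*} [Category C]
    {P X Y Z : C} (g' : P ⟶ X) (f' : P ⟶ Y) (f : X ⟶ Z) (g : Y ⟶ Z)
    (_comm : g' ≫ f = f' ≫ g) (_w : WeakPullbackStr g' f' f g) [HasPullback f g] :
    ∃ w' : WeakPullbackStr g' f' f g, w'.Coherent := by
  let s : pullback f g ⟶ P :=
    _w.lift (pullback.fst f g) (pullback.snd f g) pullback.condition
  refine ⟨⟨fun {W} x y h => pullback.lift x y h ≫ s, ?_, ?_⟩, ?_⟩
  · intro W x y h
    simp [s, Category.assoc, _w.lift_fst, pullback.lift_fst]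
  · intro W x y h
    simp [s, Category.assoc, _w.lift_snd, pullback.lift_snd]
  · intro V W σ x y h h'
    have : σ ≫ pullback.lift x y h = pullback.lift (σ ≫ x) (σ ≫ y) h' := by
      apply pullback.hom_ext <;> simp [pullback.lift_fst, pullback.lift_snd]
    simp only [← Category.assoc, this]
end

section
/- Let C have a terminal object 1 and let tp : Tm ⟶ Ty be a universe in C equipped with an elementary Unit-type structure. Then the commutative square with top map unit_1 : 1 ⟶ Tm, left map id_1 : 1 ⟶ 1, right map tp : Tm ⟶ Ty, and bottom map Unit_1 : 1 ⟶ Ty is a pullback square; that is, tp admits an algebraic Unit-type structure. -/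
/-!
Uniqueness of the unit term forces every term of type `Unit_Δ` to be `unit_Δ`, and by stability of
`Unit` the condition `a ≫ tp = σ ≫ Unit_Γ` says that `a` has type `Unit_Δ`. So every cone `(a, σ)`
over `tp` and `Unit_Γ` factors over `unit_Γ` through `σ` itself, for any context `Γ`.
-/

namespace Paper.ElemUnit

open CategoryTheory Limits

variable {C : Type*} [Category C] {U : Univ C} (E : ElemUnit U)

theorem comp_unitTm {Δ Γ : C} (σ : Δ ⟶ Γ) : σ ≫ E.unitTm Γ = E.unitTm Δ :=
  E.unitTm_unique _ (by rw [Category.assoc, E.unitTm_tp, E.unitTy_stable])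

theorem eq_comp_unitTm {Δ Γ : C} (σ : Δ ⟶ Γ) (a : Δ ⟶ U.Tm)
    (ha : a ≫ U.tp = σ ≫ E.unitTy Γ) : a = σ ≫ E.unitTm Γ := by
  rw [E.comp_unitTm, E.unitTm_unique a (ha.trans (E.unitTy_stable σ))]

theorem isPullback_unitTm (Γ : C) : IsPullback (E.unitTm Γ) (𝟙 Γ) U.tp (E.unitTy Γ) :=
  IsPullback.of_isLimit <|
    PullbackCone.IsLimit.mk (by rw [E.unitTm_tp, Category.id_comp]) PullbackCone.snd
      (fun s => (E.eq_comp_unitTm s.snd s.fst s.condition).symm)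
      (fun s => Category.comp_id _)
      (fun _ m _ hm => by rwa [Category.comp_id] at hm)

end Paper.ElemUnit

open CategoryTheory Limits Paper in
/-- for a universe with an elementary `Unit`-type structure in a
category with a terminal object, the square `(unit_1, id_1, tp, Unit_1)` is a
pullback; i.e. `tp` admits an algebraic `Unit`-type structure. -/
theorem elemUnit_to_algebraic {C : Type*} [Category C] [HasTerminal C]
    (U : Univ C) (E : ElemUnit U) :
    IsPullback (E.unitTm (⊤_ C)) (𝟙 (⊤_ C)) U.tp (E.unitTy (⊤_ C)) :=
  E.isPullback_unitTm (⊤_ C)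
end

section
/- Let (C, R) be a π-clan and tp : Tm ⟶ Ty an algebraic universe equipped with an elementary Π-type structure. Then tp admits an algebraic Π-type structure: there exist morphisms Π' : P_tp Ty ⟶ Ty and lam' : P_tp Tm ⟶ Tm such that lam' ≫ tp = P_tp(tp) ≫ Π' and this square is a pullback, where Π' sends a generalized element (A : Γ ⟶ Ty, B : Γ.A ⟶ Ty) of P_tp Ty to Π_A B and lam' sends a generalized element (A : Γ ⟶ Ty, b : Γ.A ⟶ Tm) of P_tp Tm to lam b. -/
namespace Paper

open CategoryTheory Limits

universe v u

variable {C : Type u} [Category.{v} C]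

/-- Comparison map from the clan pullback of `tp` along `A` to the universe's chosen
context extension `Γ.A` (it is an isomorphism of pullbacks). -/
noncomputable def pbToExt (U : Univ C) (D : PiClan C) (htp : D.R U.tp) {Γ : C}
    (A : Γ ⟶ U.Ty) : D.pb A U.tp htp ⟶ U.ext A :=
  U.substCons (D.pbFst A U.tp htp) A (D.pbSnd A U.tp htp)
    (D.pb_isPullback A U.tp htp).w.symm

/-- Context extensions of an algebraic universe are `R`-maps. -/
lemma disp_mem (U : Univ C) (D : PiClan C) (htp : D.R U.tp) {Γ : C} (A : Γ ⟶ U.Ty) :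
    D.R (U.disp A) :=
  D.pbMem (U.isPullback A).flip htp

end Paper

namespace Paper

open CategoryTheory Limits

universe v u
variable {C : Type u} [Category.{v} C]

namespace PiClan

variable (D : PiClan C)

section PolyLemmas

variable {E B : C} (f : E ⟶ B) (hf : D.R f) (X : C)

/-- The canonical lift `pb g f ⟶ pb (fstProj) f` induced by `t`. -/
noncomputable def polyLift {Γ : C} (g : Γ ⟶ B) (t : Γ ⟶ D.polyObj f hf X)
    (ht : t ≫ D.fstProj f hf X = g) : D.pb g f hf ⟶ D.pb (D.fstProj f hf X) f hf :=
  (D.pb_isPullback (D.fstProj f hf X) f hf).lift (D.pbFst g f hf ≫ t) (D.pbSnd g f hf)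
    (by rw [Category.assoc, ht]; exact (D.pb_isPullback g f hf).w)

@[simp] lemma polyLift_fst {Γ : C} (g : Γ ⟶ B) (t : Γ ⟶ D.polyObj f hf X)
    (ht : t ≫ D.fstProj f hf X = g) :
    D.polyLift f hf X g t ht ≫ D.pbFst (D.fstProj f hf X) f hf = D.pbFst g f hf ≫ t :=
  (D.pb_isPullback (D.fstProj f hf X) f hf).lift_fst _ _ _

@[simp] lemma polyLift_snd {Γ : C} (g : Γ ⟶ B) (t : Γ ⟶ D.polyObj f hf X)
    (ht : t ≫ D.fstProj f hf X = g) :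
    D.polyLift f hf X g t ht ≫ D.pbSnd (D.fstProj f hf X) f hf = D.pbSnd g f hf :=
  (D.pb_isPullback (D.fstProj f hf X) f hf).lift_snd _ _ _

lemma polySndAt_eq {Γ : C} (g : Γ ⟶ B) (t : Γ ⟶ D.polyObj f hf X)
    (ht : t ≫ D.fstProj f hf X = g) :
    D.polySndAt f hf X g t ht = D.polyLift f hf X g t ht ≫ D.sndProj f hf X := rfl

lemma polySndAt_congr {Γ : C} (g : Γ ⟶ B) (t t' : Γ ⟶ D.polyObj f hf X)
    (htt : t = t') (ht : t ≫ D.fstProj f hf X = g) (ht' : t' ≫ D.fstProj f hf X = g) :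
    D.polySndAt f hf X g t ht = D.polySndAt f hf X g t' ht' := by subst htt; rfl

/-- the canonical comparison into the counit's domain -/
lemma polyLift_codLift {Γ : C} (g : Γ ⟶ B) (t : Γ ⟶ D.polyObj f hf X)
    (ht : t ≫ D.fstProj f hf X = g) :
    D.polyLift f hf X g t ht ≫
      (D.polyPush f hf X).cod_isPullback.lift (D.pbFst (D.fstProj f hf X) f hf)
        (D.pbSnd (D.fstProj f hf X) f hf) (D.pb_isPullback (D.fstProj f hf X) f hf).w
      = (D.polyPush f hf X).cod_isPullback.lift (D.pbFst g f hf ≫ t) (D.pbSnd g f hf)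
          (by erw [Category.assoc, show t ≫ (D.polyPush f hf X).π = g from ht]
              exact (D.pb_isPullback g f hf).w) := by
  apply (D.polyPush f hf X).cod_isPullback.hom_ext
  · simp [IsPullback.lift_fst, IsPullback.lift_snd]
    erw [IsPullback.lift_fst, polyLift_fst]
    rfl
  · simp [IsPullback.lift_fst, IsPullback.lift_snd]
    erw [IsPullback.lift_snd, polyLift_snd]

/-- Beta: the second component of `polyPair g x` is `x`. -/
lemma polySndAt_polyPair {Γ : C} (g : Γ ⟶ B) (x : D.pb g f hf ⟶ X)
    (h : D.polyPair f hf X g x ≫ D.fstProj f hf X = g) :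
    D.polySndAt f hf X g (D.polyPair f hf X g x) h = x := by
  have hε : (D.polyPush f hf X).cod_isPullback.lift
      (D.pbFst g f hf ≫ D.polyPair f hf X g x) (D.pbSnd g f hf)
      (by erw [Category.assoc, show D.polyPair f hf X g x ≫ (D.polyPush f hf X).π = g from h]
          exact (D.pb_isPullback g f hf).w)
      ≫ (D.polyPush f hf X).ε
      = (D.pb_isPullback (D.isTerm.from X) (D.isTerm.from E) (D.allObj E)).lift
          x (D.pbSnd g f hf) (D.isTerm.hom_ext _ _) :=
    (D.polyPush f hf X).lift_ε g (D.pbFst g f hf) (D.pbSnd g f hf)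
      (D.pb_isPullback g f hf) _ _
  rw [polySndAt_eq]
  show D.polyLift f hf X g (D.polyPair f hf X g x) h ≫
      ((D.polyPush f hf X).cod_isPullback.lift (D.pbFst (D.fstProj f hf X) f hf)
        (D.pbSnd (D.fstProj f hf X) f hf) (D.pb_isPullback (D.fstProj f hf X) f hf).w
        ≫ (D.polyPush f hf X).ε ≫ D.estarFst E X) = x
  rw [← Category.assoc, polyLift_codLift, ← Category.assoc, hε]
  exact (D.pb_isPullback (D.isTerm.from X) (D.isTerm.from E) (D.allObj E)).lift_fst _ _ _

/-- Eta: any generalized element of `P_f X` is a `polyPair`. -/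
lemma polyPair_eta {Γ : C} (g : Γ ⟶ B) (t : Γ ⟶ D.polyObj f hf X)
    (ht : t ≫ D.fstProj f hf X = g) :
    D.polyPair f hf X g (D.polySndAt f hf X g t ht) = t := by
  symm
  apply (D.polyPush f hf X).lift_unique g (D.pbFst g f hf) (D.pbSnd g f hf)
    (D.pb_isPullback g f hf) _ _ t ht
  apply (D.pb_isPullback (D.isTerm.from X) (D.isTerm.from E) (D.allObj E)).hom_ext
  · erw [Category.assoc,
      (D.pb_isPullback (D.isTerm.from X) (D.isTerm.from E) (D.allObj E)).lift_fst]
    have h2 : (D.polyPush f hf X).cod_isPullback.lift (D.pbFst g f hf ≫ t) (D.pbSnd g f hf)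
        (by erw [Category.assoc, show t ≫ (D.polyPush f hf X).π = g from ht]
            exact (D.pb_isPullback g f hf).w)
        = D.polyLift f hf X g t ht ≫
          (D.polyPush f hf X).cod_isPullback.lift (D.pbFst (D.fstProj f hf X) f hf)
            (D.pbSnd (D.fstProj f hf X) f hf) (D.pb_isPullback (D.fstProj f hf X) f hf).w :=
      (D.polyLift_codLift f hf X g t ht).symm
    rw [h2, Category.assoc]
    exact (D.polySndAt_eq f hf X g t ht).symm
  · erw [Category.assoc,
      (D.pb_isPullback (D.isTerm.from X) (D.isTerm.from E) (D.allObj E)).lift_snd]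
    have h3 : (D.polyPush f hf X).ε ≫
        D.pbSnd (D.isTerm.from X) (D.isTerm.from E) (D.allObj E) = (D.polyPush f hf X).codSnd :=
      (D.polyPush f hf X).ε_comm
    erw [h3]
    exact (D.polyPush f hf X).cod_isPullback.lift_snd _ _ _

/-- `polySndAt` of a composite with a map over `B`. -/
lemma polySndAt_comp {X' : C} {Γ : C} (g : Γ ⟶ B) (t : Γ ⟶ D.polyObj f hf X)
    (ht : t ≫ D.fstProj f hf X = g) (s : D.polyObj f hf X ⟶ D.polyObj f hf X')
    (hs : s ≫ D.fstProj f hf X' = D.fstProj f hf X)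
    (ht' : (t ≫ s) ≫ D.fstProj f hf X' = g) :
    D.polySndAt f hf X' g (t ≫ s) ht' =
      D.polyLift f hf X g t ht ≫ D.polySndAt f hf X' (D.fstProj f hf X) s hs := by
  rw [polySndAt_eq, polySndAt_eq, ← Category.assoc]
  congr 1
  apply (D.pb_isPullback (D.fstProj f hf X') f hf).hom_ext
  · simp only [Category.assoc, IsPullback.lift_fst, polyLift_fst]
    slice_rhs 1 2 => rw [polyLift_fst]
    simp
  · simp [IsPullback.lift_snd, polyLift_snd]

lemma polyMap_fstProj {X X' : C} (u : X ⟶ X') :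
    D.polyMap f hf u ≫ D.fstProj f hf X' = D.fstProj f hf X :=
  D.polyPair_fst f hf X' _ _

lemma polySndAt_polyMap {X X' : C} (u : X ⟶ X') :
    D.polySndAt f hf X' (D.fstProj f hf X) (D.polyMap f hf u) (D.polyMap_fstProj f hf u)
      = D.sndProj f hf X ≫ u :=
  D.polySndAt_polyPair f hf X' (D.fstProj f hf X) (D.sndProj f hf X ≫ u) _

lemma polyPair_comp_polyMap {X' : C} {Γ : C} (g : Γ ⟶ B) (x : D.pb g f hf ⟶ X)
    (u : X ⟶ X') :
    D.polyPair f hf X g x ≫ D.polyMap f hf u = D.polyPair f hf X' g (x ≫ u) := by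
  have h1 : (D.polyPair f hf X g x ≫ D.polyMap f hf u) ≫ D.fstProj f hf X' = g := by
    rw [Category.assoc, polyMap_fstProj, D.polyPair_fst]
  rw [← D.polyPair_eta f hf X' g (D.polyPair f hf X g x ≫ D.polyMap f hf u) h1]
  congr 1
  rw [D.polySndAt_comp f hf X g (D.polyPair f hf X g x) (D.polyPair_fst f hf X g x)
    (D.polyMap f hf u) (D.polyMap_fstProj f hf u) h1, polySndAt_polyMap, ← Category.assoc]
  have h3 : D.polyLift f hf X g (D.polyPair f hf X g x) (D.polyPair_fst f hf X g x) ≫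
      D.sndProj f hf X = x :=
    D.polySndAt_polyPair f hf X g x (D.polyPair_fst f hf X g x)
  rw [h3]

end PolyLemmas

end PiClan

end Paper


namespace Paper

open CategoryTheory Limits

universe v u
variable {C : Type u} [Category.{v} C]

variable (U : Univ C) (D : PiClan C) (htp : D.R U.tp)

/-- Inverse comparison map from the chosen context extension to the clan pullback. -/
noncomputable def extToPb {Γ : C} (A : Γ ⟶ U.Ty) : U.ext A ⟶ D.pb A U.tp htp :=
  (D.pb_isPullback A U.tp htp).lift (U.disp A) (U.var A) (U.isPullback A).w.symm

@[simp] lemma extToPb_fst {Γ : C} (A : Γ ⟶ U.Ty) :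
    extToPb U D htp A ≫ D.pbFst A U.tp htp = U.disp A :=
  (D.pb_isPullback A U.tp htp).lift_fst _ _ _

@[simp] lemma extToPb_snd {Γ : C} (A : Γ ⟶ U.Ty) :
    extToPb U D htp A ≫ D.pbSnd A U.tp htp = U.var A :=
  (D.pb_isPullback A U.tp htp).lift_snd _ _ _

@[simp] lemma pbToExt_var {Γ : C} (A : Γ ⟶ U.Ty) :
    pbToExt U D htp A ≫ U.var A = D.pbSnd A U.tp htp :=
  U.substCons_var _ _ _ _

@[simp] lemma pbToExt_disp {Γ : C} (A : Γ ⟶ U.Ty) :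
    pbToExt U D htp A ≫ U.disp A = D.pbFst A U.tp htp :=
  U.substCons_disp _ _ _ _

@[simp] lemma extToPb_pbToExt {Γ : C} (A : Γ ⟶ U.Ty) :
    extToPb U D htp A ≫ pbToExt U D htp A = 𝟙 (U.ext A) := by
  apply (U.isPullback A).hom_ext <;> simp

@[simp] lemma pbToExt_extToPb {Γ : C} (A : Γ ⟶ U.Ty) :
    pbToExt U D htp A ≫ extToPb U D htp A = 𝟙 (D.pb A U.tp htp) := by
  apply (D.pb_isPullback A U.tp htp).hom_ext <;>
    simp [Category.assoc]

lemma ext_congr {Γ : C} {A A' : Γ ⟶ U.Ty} (h : A = A') : U.ext A = U.ext A' := by rw [h]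

lemma eqToHom_disp {Γ : C} {A A' : Γ ⟶ U.Ty} (h : A = A') :
    eqToHom (ext_congr U h) ≫ U.disp A' = U.disp A := by subst h; simp

lemma eqToHom_var {Γ : C} {A A' : Γ ⟶ U.Ty} (h : A = A') :
    eqToHom (ext_congr U h) ≫ U.var A' = U.var A := by subst h; simp

/-- Compatibility of weakening with the comparison maps and the canonical pullback lift. -/
lemma wk_extToPb (W : C) {Γ : C} (g : Γ ⟶ U.Ty) (t : Γ ⟶ D.polyObj U.tp htp W)
    (ht : t ≫ D.fstProj U.tp htp W = g) :
    U.wk t (D.fstProj U.tp htp W) ≫ extToPb U D htp (D.fstProj U.tp htp W) =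
      eqToHom (ext_congr U ht) ≫ extToPb U D htp g ≫ D.polyLift U.tp htp W g t ht := by
  apply (D.pb_isPullback (D.fstProj U.tp htp W) U.tp htp).hom_ext
  · rw [Category.assoc, extToPb_fst]
    show U.wk t (D.fstProj U.tp htp W) ≫ U.disp (D.fstProj U.tp htp W) = _
    rw [Univ.wk, U.substCons_disp]
    rw [Category.assoc, Category.assoc, D.polyLift_fst, ← Category.assoc, ← Category.assoc]
    rw [show (eqToHom (ext_congr U ht) ≫ extToPb U D htp g) ≫ D.pbFst g U.tp htp =
      eqToHom (ext_congr U ht) ≫ U.disp g from by rw [Category.assoc, extToPb_fst]]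
    rw [eqToHom_disp U ht]
  · rw [Category.assoc, extToPb_snd]
    show U.wk t (D.fstProj U.tp htp W) ≫ U.var (D.fstProj U.tp htp W) = _
    rw [Univ.wk, U.substCons_var]
    rw [Category.assoc, Category.assoc, D.polyLift_snd, ← Category.assoc]
    rw [Category.assoc, extToPb_snd, eqToHom_var U ht]

/-- Congruence for an elementary binder-like operation. -/
lemma F_congr {W V : C} (F : ∀ {Γ : C} (A : Γ ⟶ U.Ty), (U.ext A ⟶ W) → (Γ ⟶ V))
    {Γ : C} {A A' : Γ ⟶ U.Ty} (h : A = A') (B : U.ext A ⟶ W) (B' : U.ext A' ⟶ W)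
    (hB : B = eqToHom (ext_congr U h) ≫ B') : F A B = F A' B' := by
  subst h
  rw [hB, eqToHom_refl, Category.id_comp]

/-- A substitution-stable elementary operation, composed with a `polyPair`. -/
lemma stable_polyPair {W V : C} (F : ∀ {Γ : C} (A : Γ ⟶ U.Ty), (U.ext A ⟶ W) → (Γ ⟶ V))
    (Fstab : ∀ {Δ Γ : C} (σ : Δ ⟶ Γ) (A : Γ ⟶ U.Ty) (B : U.ext A ⟶ W),
      F (σ ≫ A) (U.wk σ A ≫ B) = σ ≫ F A B)
    {Γ : C} (g : Γ ⟶ U.Ty) (x : D.pb g U.tp htp ⟶ W) :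
    D.polyPair U.tp htp W g x ≫
        F (D.fstProj U.tp htp W) (extToPb U D htp _ ≫ D.sndProj U.tp htp W)
      = F g (extToPb U D htp g ≫ x) := by
  rw [← Fstab (D.polyPair U.tp htp W g x) (D.fstProj U.tp htp W) _]
  apply F_congr U F (D.polyPair_fst U.tp htp W g x)
  rw [← Category.assoc,
    wk_extToPb U D htp W g (D.polyPair U.tp htp W g x) (D.polyPair_fst U.tp htp W g x)]
  simp only [Category.assoc]
  congr 2
  exact D.polySndAt_polyPair U.tp htp W g x (D.polyPair_fst U.tp htp W g x)

/-- The generalized-element version of `stable_polyPair`. -/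
lemma stable_comp {W V : C} (F : ∀ {Γ : C} (A : Γ ⟶ U.Ty), (U.ext A ⟶ W) → (Γ ⟶ V))
    (Fstab : ∀ {Δ Γ : C} (σ : Δ ⟶ Γ) (A : Γ ⟶ U.Ty) (B : U.ext A ⟶ W),
      F (σ ≫ A) (U.wk σ A ≫ B) = σ ≫ F A B)
    {Γ : C} (g : Γ ⟶ U.Ty) (t : Γ ⟶ D.polyObj U.tp htp W)
    (ht : t ≫ D.fstProj U.tp htp W = g) :
    t ≫ F (D.fstProj U.tp htp W) (extToPb U D htp _ ≫ D.sndProj U.tp htp W)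
      = F g (extToPb U D htp g ≫ D.polySndAt U.tp htp W g t ht) := by
  conv_lhs => rw [← D.polyPair_eta U.tp htp W g t ht]
  exact stable_polyPair U D htp F Fstab g _

end Paper


namespace Paper

open CategoryTheory Limits

universe v u
variable {C : Type u} [Category.{v} C]

lemma unlam_congr (U : Univ C) (P : ElemPi U) {Γ : C} (A : Γ ⟶ U.Ty)
    {B B' : U.ext A ⟶ U.Ty} (hB : B = B') {f f' : Γ ⟶ U.Tm} (hf : f = f')
    (h : f ≫ U.tp = P.Pi A B) (h' : f' ≫ U.tp = P.Pi A B') :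
    P.unlam A B f h = P.unlam A B' f' h' := by subst hB; subst hf; rfl

lemma piLift_aux (U : Univ C) (D : PiClan C) (htp : D.R U.tp) (P : ElemPi U)
    {Γ : C} (a : Γ ⟶ U.Tm) (c : Γ ⟶ D.polyObj U.tp htp U.Ty)
    (A : Γ ⟶ U.Ty) (hA : c ≫ D.fstProj U.tp htp U.Ty = A)
    (hcond : a ≫ U.tp = c ≫ P.Pi (D.fstProj U.tp htp U.Ty)
      (extToPb U D htp _ ≫ D.sndProj U.tp htp U.Ty)) :
    ∃! m : Γ ⟶ D.polyObj U.tp htp U.Tm,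
      m ≫ P.lam (D.fstProj U.tp htp U.Tm)
          (extToPb U D htp _ ≫ D.sndProj U.tp htp U.Tm) = a ∧
      m ≫ D.polyMap U.tp htp U.tp = c := by
  have hPi : a ≫ U.tp =
      P.Pi A (extToPb U D htp A ≫ D.polySndAt U.tp htp U.Ty A c hA) := by
    rw [hcond, stable_comp U D htp P.Pi P.Pi_stable A c hA]
  refine ⟨D.polyPair U.tp htp U.Tm A (pbToExt U D htp A ≫ P.unlam A _ a hPi),
    ⟨?_, ?_⟩, ?_⟩
  · rw [stable_polyPair U D htp P.lam P.lam_stable A _, ← Category.assoc,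
      extToPb_pbToExt, Category.id_comp]
    exact P.lam_unlam A _ a hPi
  · rw [D.polyPair_comp_polyMap]
    have hb : (pbToExt U D htp A ≫ P.unlam A _ a hPi) ≫ U.tp
        = D.polySndAt U.tp htp U.Ty A c hA := by
      rw [Category.assoc, P.unlam_tp, ← Category.assoc, pbToExt_extToPb, Category.id_comp]
    rw [hb]
    exact D.polyPair_eta U.tp htp U.Ty A c hA
  · rintro m ⟨hm1, hm2⟩
    have hmf : m ≫ D.fstProj U.tp htp U.Tm = A := by
      rw [← D.polyMap_fstProj U.tp htp U.tp, ← Category.assoc, hm2, hA]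
    have hmeta : D.polyPair U.tp htp U.Tm A (D.polySndAt U.tp htp U.Tm A m hmf) = m :=
      D.polyPair_eta U.tp htp U.Tm A m hmf
    have h1 : D.polyPair U.tp htp U.Ty A
        (D.polySndAt U.tp htp U.Tm A m hmf ≫ U.tp) = c := by
      rw [← D.polyPair_comp_polyMap, hmeta, hm2]
    have hxx : D.polySndAt U.tp htp U.Tm A m hmf ≫ U.tp
        = D.polySndAt U.tp htp U.Ty A c hA := by
      calc D.polySndAt U.tp htp U.Tm A m hmf ≫ U.tp
          = D.polySndAt U.tp htp U.Ty A (D.polyPair U.tp htp U.Ty A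
              (D.polySndAt U.tp htp U.Tm A m hmf ≫ U.tp))
              (D.polyPair_fst U.tp htp U.Ty A _) :=
            (D.polySndAt_polyPair U.tp htp U.Ty A _ _).symm
        _ = D.polySndAt U.tp htp U.Ty A c hA :=
            D.polySndAt_congr U.tp htp U.Ty A _ _ h1 _ _
    have hlam : P.lam A (extToPb U D htp A ≫ D.polySndAt U.tp htp U.Tm A m hmf) = a := by
      have hst := stable_polyPair U D htp P.lam P.lam_stable A
        (D.polySndAt U.tp htp U.Tm A m hmf)
      rw [hmeta, hm1] at hst
      exact hst.symm
    have htp' : (extToPb U D htp A ≫ D.polySndAt U.tp htp U.Tm A m hmf) ≫ U.tp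
        = extToPb U D htp A ≫ D.polySndAt U.tp htp U.Ty A c hA := by
      rw [Category.assoc, hxx]
    have hbe : P.unlam A _ a hPi
        = extToPb U D htp A ≫ D.polySndAt U.tp htp U.Tm A m hmf :=
      calc P.unlam A (extToPb U D htp A ≫ D.polySndAt U.tp htp U.Ty A c hA) a hPi
          = P.unlam A ((extToPb U D htp A ≫ D.polySndAt U.tp htp U.Tm A m hmf) ≫ U.tp)
              (P.lam A (extToPb U D htp A ≫ D.polySndAt U.tp htp U.Tm A m hmf))
              (by rw [P.lam_tp]) :=
            unlam_congr U P A htp'.symm hlam.symm hPi _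
        _ = extToPb U D htp A ≫ D.polySndAt U.tp htp U.Tm A m hmf := P.unlam_lam A _ _
    rw [← hmeta]
    congr 1
    rw [hbe, ← Category.assoc, pbToExt_extToPb, Category.id_comp]

end Paper


open CategoryTheory Limits Paper in
/-- an elementary `Π`-type structure on an algebraic universe `tp` in a
π-clan gives rise to an algebraic `Π`-type structure: morphisms
`Π' : P_tp Ty ⟶ Ty` and `lam' : P_tp Tm ⟶ Tm` forming a pullback square over `tp`,
where on generalized elements `Π'` sends `(A, B)` to `Π_A B` and `lam'` sends
`(A, b)` to `lam b`. -/
theorem elemPi_to_algebraicPi {C : Type*} [Category C] (D : PiClan C)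
    (U : Univ C) (htp : D.R U.tp) (P : ElemPi U) :
    ∃ (Pi' : D.polyObj U.tp htp U.Ty ⟶ U.Ty)
      (lam' : D.polyObj U.tp htp U.Tm ⟶ U.Tm),
      (∀ {Γ : C} (A : Γ ⟶ U.Ty) (B : U.ext A ⟶ U.Ty),
        D.polyPair U.tp htp U.Ty A (pbToExt U D htp A ≫ B) ≫ Pi' = P.Pi A B) ∧
      (∀ {Γ : C} (A : Γ ⟶ U.Ty) (b : U.ext A ⟶ U.Tm),
        D.polyPair U.tp htp U.Tm A (pbToExt U D htp A ≫ b) ≫ lam' = P.lam A b) ∧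
      IsPullback lam' (D.polyMap U.tp htp U.tp) U.tp Pi' := by
  
  refine ⟨P.Pi (D.fstProj U.tp htp U.Ty) (extToPb U D htp _ ≫ D.sndProj U.tp htp U.Ty),
    P.lam (D.fstProj U.tp htp U.Tm) (extToPb U D htp _ ≫ D.sndProj U.tp htp U.Tm),
    ?_, ?_, ?_⟩
  · intro Γ A B
    rw [stable_polyPair U D htp P.Pi P.Pi_stable A (pbToExt U D htp A ≫ B),
      ← Category.assoc, extToPb_pbToExt, Category.id_comp]
  · intro Γ A b
    rw [stable_polyPair U D htp P.lam P.lam_stable A (pbToExt U D htp A ≫ b),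
      ← Category.assoc, extToPb_pbToExt, Category.id_comp]
  · have comm : P.lam (D.fstProj U.tp htp U.Tm)
        (extToPb U D htp _ ≫ D.sndProj U.tp htp U.Tm) ≫ U.tp
        = D.polyMap U.tp htp U.tp ≫ P.Pi (D.fstProj U.tp htp U.Ty)
            (extToPb U D htp _ ≫ D.sndProj U.tp htp U.Ty) := by
      rw [P.lam_tp,
        stable_comp U D htp P.Pi P.Pi_stable (D.fstProj U.tp htp U.Tm)
          (D.polyMap U.tp htp U.tp) (D.polyMap_fstProj U.tp htp U.tp),
        D.polySndAt_polyMap U.tp htp U.tp]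
      simp only [Category.assoc]
    have key := fun (s : PullbackCone U.tp (P.Pi (D.fstProj U.tp htp U.Ty)
        (extToPb U D htp _ ≫ D.sndProj U.tp htp U.Ty))) =>
      piLift_aux U D htp P s.fst s.snd (s.snd ≫ D.fstProj U.tp htp U.Ty) rfl s.condition
    exact IsPullback.of_isLimit (PullbackCone.IsLimit.mk comm
      (fun s => (key s).choose)
      (fun s => (key s).choose_spec.1.1)
      (fun s => (key s).choose_spec.1.2)
      (fun s m h1 h2 => (key s).choose_spec.2 m ⟨h1, h2⟩))
end
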